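/- arXiv:2505.08655 — 6 statements merged into one kernel-verified Lean document; each statement's English description precedes it below -/
import Mathlib

section
/- Let G be a finite gamegraph and k a nonnegative integer. In the delayed gamegraph G⊓D_k, for every position p of G and every r with 2r ≤ k we have nim(p,2r) = nim(p,0) = nim(p), and for every r with 2r+1 ≤ k we have nim(p,2r+1) = nim(p,1). -/
/-- The minimum excludant of a set of naturals. -/
noncomputable def mex (S : Set ℕ) : ℕ := sInf {n : ℕ | n ∉ S}

/-- A gamegraph: positions with an option function whose option relation is
well-founded (all plays are acyclic), together with a starting position. -/
structure GameGraph where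
  Pos : Type
  opt : Pos → Set Pos
  wf : WellFounded fun q p => q ∈ opt p
  start : Pos

/-- The nim-value of a position: the mex of the nim-values of its options;
terminal positions get nim-value `0`. -/
noncomputable def GameGraph.nim (G : GameGraph) : G.Pos → ℕ :=
  G.wf.fix fun p ih => mex {n : ℕ | ∃ q, ∃ h : q ∈ G.opt p, ih q h = n}

/-- The nim-value of a gamegraph is the nim-value of its starting position. -/
noncomputable def GameGraph.nimValue (G : GameGraph) : ℕ := G.nim G.start

/-- The option function of the delayed gamegraph `G ⊓ D_k`: from `(p, r)` one may
either move to `(q, r)` for an option `q` of `p`, or, when `r ≥ 1` and `p` is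
nonterminal in `G`, make a delay move to `(p, r - 1)`. -/
def delayedOpt (G : GameGraph) : G.Pos × ℕ → Set (G.Pos × ℕ) := fun x =>
  {y | (∃ q ∈ G.opt x.1, y = (q, x.2)) ∨
       (1 ≤ x.2 ∧ (G.opt x.1).Nonempty ∧ y = (x.1, x.2 - 1))}

theorem delayedWF (G : GameGraph) : WellFounded fun y x => y ∈ delayedOpt G x := by
  have hsub : Subrelation (fun y x : G.Pos × ℕ => y ∈ delayedOpt G x)
      (Prod.Lex (fun q p => q ∈ G.opt p) (· < ·)) := by
    rintro ⟨p1, r1⟩ ⟨p2, r2⟩ (⟨q, hq, heq⟩ | ⟨hr, -, heq⟩)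
    · cases heq; exact Prod.Lex.left _ _ hq
    · cases heq; exact Prod.Lex.right _ (by omega)
  exact Subrelation.wf hsub (WellFounded.prod_lex G.wf Nat.lt_wfRel.wf)

/-- The delayed gamegraph `G ⊓ D_k`.  Its positions are pairs `(p, r)`; the
starting position is `(G.start, k)` (pairs with second coordinate larger than
`k` are unreachable from it). -/
def GameGraph.delayed (G : GameGraph) (k : ℕ) : GameGraph :=
  ⟨G.Pos × ℕ, delayedOpt G, delayedWF G, (G.start, k)⟩

section Aux

lemma mex_notMem {S : Set ℕ} (h : S.Finite) : mex S ∉ S := by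
  have hne : {n : ℕ | n ∉ S}.Nonempty := by
    have h2 : Sᶜ.Infinite := h.infinite_compl
    exact h2.nonempty
  exact Nat.sInf_mem hne

lemma mex_insert_ne {S : Set ℕ} (hS : S.Finite) {x : ℕ} (hx : x ≠ mex S) :
    mex (insert x S) = mex S := by
  apply le_antisymm
  · apply Nat.sInf_le
    simp only [Set.mem_setOf_eq, Set.mem_insert_iff, not_or]
    exact ⟨fun h => hx h.symm, mex_notMem hS⟩
  · apply Nat.sInf_le
    have h := mex_notMem (hS.insert x)
    simp only [Set.mem_insert_iff, not_or] at h
    exact h.2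

lemma nim_unfold (H : GameGraph) (p : H.Pos) :
    H.nim p = mex {n | ∃ q, ∃ _ : q ∈ H.opt p, H.nim q = n} := by
  conv_lhs => rw [GameGraph.nim, WellFounded.fix_eq]
  rfl

lemma img_finite {α : Type} [Finite α] (f : α → ℕ) (S : Set α) :
    {n | ∃ q, ∃ _ : q ∈ S, f q = n}.Finite := by
  have h : {n | ∃ q, ∃ _ : q ∈ S, f q = n} = f '' S := by
    ext n
    constructor
    · rintro ⟨q, hq, rfl⟩; exact ⟨q, hq, rfl⟩
    · rintro ⟨q, hq, rfl⟩; exact ⟨q, hq, rfl⟩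
  rw [h]
  exact S.toFinite.image f

lemma mem_delayedOpt_zero {G : GameGraph} {p : G.Pos} {y : G.Pos × ℕ} :
    y ∈ delayedOpt G (p, 0) ↔ ∃ q ∈ G.opt p, y = (q, 0) := by
  simp [delayedOpt]

lemma mem_delayedOpt_succ {G : GameGraph} {p : G.Pos} {t : ℕ} {y : G.Pos × ℕ} :
    y ∈ delayedOpt G (p, t + 1) ↔
      (∃ q ∈ G.opt p, y = (q, t + 1)) ∨ ((G.opt p).Nonempty ∧ y = (p, t)) := by
  simp [delayedOpt]

variable (G : GameGraph) (k : ℕ)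

lemma valset_zero (p : G.Pos) :
    {n | ∃ y, ∃ _ : y ∈ (G.delayed k).opt (p, 0), (G.delayed k).nim y = n}
      = {n | ∃ q, ∃ _ : q ∈ G.opt p, (G.delayed k).nim (q, 0) = n} := by
  ext n
  constructor
  · rintro ⟨y, hy, rfl⟩
    obtain ⟨q, hq, rfl⟩ := mem_delayedOpt_zero.mp hy
    exact ⟨q, hq, rfl⟩
  · rintro ⟨q, hq, rfl⟩
    exact ⟨(q, 0), mem_delayedOpt_zero.mpr ⟨q, hq, rfl⟩, rfl⟩

lemma valset_succ (p : G.Pos) (t : ℕ) (hp : (G.opt p).Nonempty) :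
    {n | ∃ y, ∃ _ : y ∈ (G.delayed k).opt (p, t + 1), (G.delayed k).nim y = n}
      = insert ((G.delayed k).nim (p, t))
          {n | ∃ q, ∃ _ : q ∈ G.opt p, (G.delayed k).nim (q, t + 1) = n} := by
  ext n
  constructor
  · rintro ⟨y, hy, rfl⟩
    rcases mem_delayedOpt_succ.mp hy with ⟨q, hq, rfl⟩ | ⟨-, rfl⟩
    · exact Or.inr ⟨q, hq, rfl⟩
    · exact Or.inl rfl
  · rintro (rfl | ⟨q, hq, rfl⟩)
    · exact ⟨(p, t), mem_delayedOpt_succ.mpr (Or.inr ⟨hp, rfl⟩), rfl⟩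
    · exact ⟨(q, t + 1), mem_delayedOpt_succ.mpr (Or.inl ⟨q, hq, rfl⟩), rfl⟩

lemma nim_terminal (p : G.Pos) (hp : ¬(G.opt p).Nonempty) (s : ℕ) :
    (G.delayed k).nim (p, s) = 0 ∧ G.nim p = 0 := by
  have h1 : (G.delayed k).nim (p, s) = mex ∅ := by
    rw [nim_unfold (G.delayed k) (p, s)]
    congr 1
    ext n
    simp only [Set.mem_setOf_eq, Set.mem_empty_iff_false, iff_false]
    rintro ⟨y, hy, rfl⟩
    rcases hy with ⟨q, hq, -⟩ | ⟨-, hne, -⟩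
    · exact hp ⟨q, hq⟩
    · exact hp hne
  have h2 : G.nim p = mex ∅ := by
    rw [nim_unfold]
    congr 1
    ext n
    simp only [Set.mem_setOf_eq, Set.mem_empty_iff_false, iff_false]
    rintro ⟨q, hq, -⟩
    exact hp ⟨q, hq⟩
  have h3 : mex ∅ = 0 := by
    apply Nat.sInf_eq_zero.mpr
    exact Or.inl (by simp)
  rw [h1, h2, h3]
  exact ⟨rfl, rfl⟩

lemma nim_zero_eq [Finite G.Pos] (p : G.Pos) : (G.delayed k).nim (p, 0) = G.nim p := by
  induction p using WellFounded.induction G.wf with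
  | _ p ih =>
    by_cases hp : (G.opt p).Nonempty
    · rw [nim_unfold (G.delayed k) (p, 0), valset_zero, nim_unfold G p]
      congr 1
      ext n
      constructor
      · rintro ⟨q, hq, rfl⟩; exact ⟨q, hq, (ih q hq).symm⟩
      · rintro ⟨q, hq, rfl⟩; exact ⟨q, hq, ih q hq⟩
    · obtain ⟨h1, h2⟩ := nim_terminal G k p hp 0
      rw [h1, h2]

lemma nim_step [Finite G.Pos] (p : G.Pos) (s : ℕ) :
    (G.delayed k).nim (p, s + 2) = (G.delayed k).nim (p, s) := by
  induction p using WellFounded.induction G.wf generalizing s with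
  | _ p ih =>
    by_cases hp : (G.opt p).Nonempty
    · induction s with
      | zero =>
        have hV : {n | ∃ q, ∃ _ : q ∈ G.opt p, (G.delayed k).nim (q, 0 + 2) = n}
            = {n | ∃ q, ∃ _ : q ∈ G.opt p, (G.delayed k).nim (q, 0) = n} := by
          ext n
          constructor
          · rintro ⟨q, hq, rfl⟩; exact ⟨q, hq, (ih q hq 0).symm⟩
          · rintro ⟨q, hq, rfl⟩; exact ⟨q, hq, ih q hq 0⟩
        have hfin : {n | ∃ q, ∃ _ : q ∈ G.opt p, (G.delayed k).nim (q, 0) = n}.Finite :=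
          img_finite _ _
        have h0 : (G.delayed k).nim (p, 0)
            = mex {n | ∃ q, ∃ _ : q ∈ G.opt p, (G.delayed k).nim (q, 0) = n} := by
          rw [nim_unfold (G.delayed k) (p, 0), valset_zero]
        have h1ne : (G.delayed k).nim (p, 1)
            ≠ mex {n | ∃ q, ∃ _ : q ∈ G.opt p, (G.delayed k).nim (q, 0) = n} := by
          rw [← h0]
          have h1 : (G.delayed k).nim (p, 1)
              = mex (insert ((G.delayed k).nim (p, 0))
                  {n | ∃ q, ∃ _ : q ∈ G.opt p, (G.delayed k).nim (q, 0 + 1) = n}) := by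
            rw [nim_unfold (G.delayed k) (p, 1), valset_succ G k p 0 hp]
          rw [h1]
          intro hcontra
          have hfin1 : (insert ((G.delayed k).nim (p, 0))
              {n | ∃ q, ∃ _ : q ∈ G.opt p, (G.delayed k).nim (q, 0 + 1) = n}).Finite :=
            (img_finite _ _).insert _
          have hnm := mex_notMem hfin1
          rw [hcontra] at hnm
          exact hnm (Set.mem_insert _ _)
        show (G.delayed k).nim (p, 1 + 1) = _
        rw [nim_unfold (G.delayed k) (p, 1 + 1), valset_succ G k p 1 hp]
        have : (1 : ℕ) + 1 = 0 + 2 := rfl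
        rw [this, hV, mex_insert_ne hfin h1ne, ← h0]
      | succ t iht =>
        have e1 : t + 1 + 2 = (t + 2) + 1 := rfl
        have hset : {n | ∃ q, ∃ _ : q ∈ G.opt p, (G.delayed k).nim (q, t + 2 + 1) = n}
            = {n | ∃ q, ∃ _ : q ∈ G.opt p, (G.delayed k).nim (q, t + 1) = n} := by
          ext n
          constructor
          · rintro ⟨q, hq, rfl⟩; exact ⟨q, hq, (ih q hq (t + 1)).symm⟩
          · rintro ⟨q, hq, rfl⟩; exact ⟨q, hq, ih q hq (t + 1)⟩
        rw [e1, nim_unfold (G.delayed k) (p, t + 2 + 1), valset_succ G k p (t + 2) hp, hset, iht,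
          nim_unfold (G.delayed k) (p, t + 1), valset_succ G k p t hp]
    · obtain ⟨h1, -⟩ := nim_terminal G k p hp (s + 2)
      obtain ⟨h2, -⟩ := nim_terminal G k p hp s
      rw [h1, h2]

end Aux

/-- In the delayed gamegraph `G ⊓ D_k` of a finite gamegraph `G`, for every
position `p` of `G`: `nim (p, 2r) = nim (p, 0) = nim p` whenever `2r ≤ k`, and
`nim (p, 2r+1) = nim (p, 1)` whenever `2r + 1 ≤ k`. -/
theorem delayed_nim (G : GameGraph) [Finite G.Pos] (k : ℕ) (p : G.Pos) :
    (∀ r : ℕ, 2 * r ≤ k →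
      (G.delayed k).nim (p, 2 * r) = (G.delayed k).nim (p, 0) ∧
      (G.delayed k).nim (p, 2 * r) = G.nim p) ∧
    (∀ r : ℕ, 2 * r + 1 ≤ k →
      (G.delayed k).nim (p, 2 * r + 1) = (G.delayed k).nim (p, 1)) := by
  have hstep : ∀ r s, (G.delayed k).nim (p, s + 2 * r) = (G.delayed k).nim (p, s) := by
    intro r
    induction r with
    | zero => intro s; rfl
    | succ r ihr =>
      intro s
      have e : s + 2 * (r + 1) = (s + 2 * r) + 2 := by ring
      rw [e, nim_step, ihr]
  constructor
  · intro r _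
    have h1 : (G.delayed k).nim (p, 2 * r) = (G.delayed k).nim (p, 0) := by
      have := hstep r 0
      simpa using this
    exact ⟨h1, by rw [h1, nim_zero_eq]⟩
  · intro r _
    have := hstep r 1
    have e : 1 + 2 * r = 2 * r + 1 := by ring
    rwa [e] at this
end

section
/- Let 2 ≤ m ≤ n with 3 ≤ n. The map α, sending each position of DNT(P_m□P_n) to the 3×3 matrix counting unselected vertices in the nine regions of the grid, is an option preserving map from the gamegraph of DNT(P_m□P_n) onto the gamegraph of the matrix game DNT(M), where M = [[1, n−2, 1], [m−2, (m−2)(n−2), m−2], [1, n−2, 1]] is the image of the starting position. -/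
/-- 3×3 matrices of nonnegative integers. -/
abbrev Mat3 := Fin 3 → Fin 3 → ℕ

/-- All four edge sums (top row, bottom row, left column, right column) are positive. -/
def edgeOK (M : Mat3) : Prop :=
  0 < M 0 0 + M 0 1 + M 0 2 ∧ 0 < M 2 0 + M 2 1 + M 2 2 ∧
  0 < M 0 0 + M 1 0 + M 2 0 ∧ 0 < M 0 2 + M 1 2 + M 2 2

/-- Decrease entry `(i, j)` by one. -/
def decEntry (M : Mat3) (i j : Fin 3) : Mat3 :=
  fun a b => if a = i ∧ b = j then M a b - 1 else M a b

/-- Matrices obtained from `M` by decreasing one positive entry by `1`. -/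
def matMoves (M : Mat3) : Set Mat3 :=
  {N | ∃ i j, 0 < M i j ∧ N = decEntry M i j}

/-- Options in the avoidance matrix game `DNT(M)`: decrease a positive entry by one
so that all four edge sums remain positive. -/
def DNTmatOpt (M : Mat3) : Set Mat3 := {N | N ∈ matMoves M ∧ edgeOK N}

/-- Options in the achievement matrix game `TER(M)`: a matrix with a zero edge sum is
terminal; otherwise any positive entry may be decreased by one. -/
def TERmatOpt (M : Mat3) : Set Mat3 := {N | edgeOK M ∧ N ∈ matMoves M}

def mtot (M : Mat3) : ℕ := ∑ p : Fin 3 × Fin 3, M p.1 p.2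

theorem mtot_lt {M N : Mat3} (h : N ∈ matMoves M) : mtot N < mtot M := by
  obtain ⟨i, j, hpos, rfl⟩ := h
  unfold mtot
  apply Finset.sum_lt_sum
  · intro p _
    simp only [decEntry]
    split <;> omega
  · refine ⟨(i, j), Finset.mem_univ _, ?_⟩
    have hlt : M i j - 1 < M i j := by omega
    simpa [decEntry] using hlt

theorem matWF {opt : Mat3 → Set Mat3} (h : ∀ M N, N ∈ opt M → N ∈ matMoves M) :
    WellFounded fun N M => N ∈ opt M :=
  Subrelation.wf (fun {N M} hNM => mtot_lt (h M N hNM)) (InvImage.wf mtot Nat.lt_wfRel.wf)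

/-- The gamegraph of the matrix game `DNT(M)` with starting position `M`. -/
def DNTmat (M : Mat3) : GameGraph :=
  ⟨Mat3, DNTmatOpt, matWF (fun _ _ h => h.1), M⟩

/-- The gamegraph of the matrix game `TER(M)` with starting position `M`. -/
def TERmat (M : Mat3) : GameGraph :=
  ⟨Mat3, TERmatOpt, matWF (fun _ _ h => h.2), M⟩

/-- The nim-value of the matrix game `DNT(M)`. -/
noncomputable def nimDNTmat (M : Mat3) : ℕ := (DNTmat M).nimValue

/-- The nim-value of the matrix game `TER(M)`. -/
noncomputable def nimTERmat (M : Mat3) : ℕ := (TERmat M).nimValue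

/-- A vertex set `K` is geodetically convex if it contains every vertex on a
geodesic (shortest path) between two of its vertices; in a connected graph,
`w` lies on a geodesic from `u` to `v` iff `dist u w + dist w v = dist u v`. -/
def geoConvex {V : Type} (G : SimpleGraph V) (K : Set V) : Prop :=
  ∀ u ∈ K, ∀ v ∈ K, ∀ w, G.dist u w + G.dist w v = G.dist u v → w ∈ K

/-- The geodetic convex hull: the intersection of all convex sets containing `S`. -/
def geoHull {V : Type} (G : SimpleGraph V) (S : Set V) : Set V :=
  ⋂₀ {K | geoConvex G K ∧ S ⊆ K}

section Games
variable {V : Type} [Fintype V] [DecidableEq V]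

/-- Options in the avoidance game `DNT(Γ)`: select an unselected vertex so that the
convex hull of the remaining unselected vertices is still the whole vertex set. -/
def DNTgraphOpt (G : SimpleGraph V) (P : Finset V) : Set (Finset V) :=
  {Q | ∃ v, v ∉ P ∧ Q = insert v P ∧
    geoHull G ((↑(insert v P) : Set V)ᶜ) = Set.univ}

/-- Options in the achievement game `TER(Γ)`: a position whose unselected vertices
have convex hull smaller than the whole vertex set is terminal; otherwise any
unselected vertex may be selected. -/
def TERgraphOpt (G : SimpleGraph V) (P : Finset V) : Set (Finset V) :=
  {Q | geoHull G ((↑P : Set V)ᶜ) = Set.univ ∧ ∃ v, v ∉ P ∧ Q = insert v P}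

theorem graphWF {opt : Finset V → Set (Finset V)}
    (h : ∀ P Q, Q ∈ opt P → ∃ v, v ∉ P ∧ Q = insert v P) :
    WellFounded fun Q P => Q ∈ opt P := by
  have hsub : Subrelation (fun Q P : Finset V => Q ∈ opt P)
      (InvImage (· < ·) (fun P : Finset V => Fintype.card V - P.card)) := by
    intro Q P hQP
    obtain ⟨v, hv, rfl⟩ := h P Q hQP
    have h1 : (insert v P).card = P.card + 1 := Finset.card_insert_of_notMem hv
    have h2 : (insert v P).card ≤ Fintype.card V := Finset.card_le_univ _
    show Fintype.card V - (insert v P).card < Fintype.card V - P.card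
    omega
  exact Subrelation.wf hsub (InvImage.wf _ Nat.lt_wfRel.wf)

/-- The gamegraph of the avoidance game `DNT(Γ)`; positions are the sets of jointly
selected vertices and the starting position is `∅`. -/
def DNTgame (G : SimpleGraph V) : GameGraph :=
  ⟨Finset V, DNTgraphOpt G,
    graphWF (by rintro P Q ⟨v, hv, rfl, -⟩; exact ⟨v, hv, rfl⟩), ∅⟩

/-- The gamegraph of the achievement game `TER(Γ)`; positions are the sets of jointly
selected vertices and the starting position is `∅`. -/
def TERgame (G : SimpleGraph V) : GameGraph :=
  ⟨Finset V, TERgraphOpt G,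
    graphWF (by rintro P Q ⟨-, v, hv, rfl⟩; exact ⟨v, hv, rfl⟩), ∅⟩

end Games

/-- The grid graph `P_m □ P_n`, the box product of two path graphs. -/
def gridGraph (m n : ℕ) : SimpleGraph (Fin m × Fin n) :=
  (SimpleGraph.pathGraph m).boxProd (SimpleGraph.pathGraph n)

/-- Region index of a coordinate in a path on `m` vertices: `0` for the first
vertex, `2` for the last vertex, `1` for interior vertices. -/
def regIdx (m : ℕ) (i : Fin m) : Fin 3 :=
  if i.val = 0 then 0 else if i.val = m - 1 then 2 else 1

/-- The map `α` sending a position `P` (the set of selected vertices) of a game on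
the grid `P_m □ P_n` to the 3×3 matrix counting the unselected vertices in the
nine regions of the grid (four corners, four sides without corners, interior). -/
def alphaMap (m n : ℕ) (P : Finset (Fin m × Fin n)) : Mat3 := fun a b =>
  (Finset.univ.filter
    (fun v : Fin m × Fin n => v ∉ P ∧ regIdx m v.1 = a ∧ regIdx n v.2 = b)).card

/-- A map between gamegraphs is option preserving if `Opt_H (β p) = β '' (Opt_G p)`
for every position `p`. -/
def OptionPreserving (G H : GameGraph) (β : G.Pos → H.Pos) : Prop :=
  ∀ p : G.Pos, H.opt (β p) = β '' G.opt p

def d2 {m n : ℕ} (u v : Fin m × Fin n) : ℕ :=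
  Nat.dist u.1.val v.1.val + Nat.dist u.2.val v.2.val

lemma d2_le_walk {m n : ℕ} {u v : Fin m × Fin n} (w : (gridGraph m n).Walk u v) :
    d2 u v ≤ w.length := by
  induction w with
  | nil => simp [d2, Nat.dist]
  | cons h p ih =>
    rename_i a b c
    have hab : d2 a b = 1 := by
      rcases SimpleGraph.boxProd_adj.mp h with ⟨h1, h2⟩ | ⟨h1, h2⟩ <;>
        rcases SimpleGraph.pathGraph_adj.mp h1 with h3 | h3 <;>
          simp [d2, h2, Nat.dist] <;> omega
    have tri : d2 a c ≤ d2 a b + d2 b c := by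
      simp only [d2, Nat.dist] at *; omega
    simp only [SimpleGraph.Walk.length_cons]
    omega

lemma exists_walk_d2 {m n : ℕ} : ∀ (k : ℕ) (u v : Fin m × Fin n), d2 u v ≤ k →
    ∃ w : (gridGraph m n).Walk u v, w.length ≤ k := by
  intro k
  induction k with
  | zero =>
    intro u v h
    have : u = v := by
      simp only [d2, Nat.dist] at h
      have := u.1.isLt; have := v.1.isLt
      refine Prod.ext (Fin.ext ?_) (Fin.ext ?_) <;> omega
    exact this ▸ ⟨SimpleGraph.Walk.nil, by simp⟩
  | succ k ih =>
    intro u v h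
    by_cases huv : u = v
    · exact huv ▸ ⟨SimpleGraph.Walk.nil, by simp⟩
    · -- move one step
      have hne : u.1.val ≠ v.1.val ∨ u.2.val ≠ v.2.val := by
        by_contra hc
        push_neg at hc
        exact huv (Prod.ext (Fin.ext hc.1) (Fin.ext hc.2))
      rcases hne with h1 | h1
      · rcases Nat.lt_or_ge u.1.val v.1.val with hlt | hge
        · set x : Fin m × Fin n := (⟨u.1.val + 1, by have := v.1.isLt; omega⟩, u.2) with hx
          have hadj : (gridGraph m n).Adj u x := by
            refine SimpleGraph.boxProd_adj.mpr (Or.inl ⟨?_, rfl⟩)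
            exact SimpleGraph.pathGraph_adj.mpr (Or.inl rfl)
          have hd : d2 x v ≤ k := by simp only [d2, Nat.dist, hx] at *; omega
          obtain ⟨w, hw⟩ := ih x v hd
          exact ⟨SimpleGraph.Walk.cons hadj w, by simpa using hw⟩
        · have hlt : v.1.val < u.1.val := by omega
          set x : Fin m × Fin n := (⟨u.1.val - 1, by have := u.1.isLt; omega⟩, u.2) with hx
          have hadj : (gridGraph m n).Adj u x := by
            refine SimpleGraph.boxProd_adj.mpr (Or.inl ⟨?_, rfl⟩)
            exact SimpleGraph.pathGraph_adj.mpr (Or.inr (by show u.1.val - 1 + 1 = u.1.val; omega))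
          have hd : d2 x v ≤ k := by simp only [d2, Nat.dist, hx] at *; omega
          obtain ⟨w, hw⟩ := ih x v hd
          exact ⟨SimpleGraph.Walk.cons hadj w, by simpa using hw⟩
      · rcases Nat.lt_or_ge u.2.val v.2.val with hlt | hge
        · set x : Fin m × Fin n := (u.1, ⟨u.2.val + 1, by have := v.2.isLt; omega⟩) with hx
          have hadj : (gridGraph m n).Adj u x := by
            refine SimpleGraph.boxProd_adj.mpr (Or.inr ⟨?_, rfl⟩)
            exact SimpleGraph.pathGraph_adj.mpr (Or.inl rfl)
          have hd : d2 x v ≤ k := by simp only [d2, Nat.dist, hx] at *; omega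
          obtain ⟨w, hw⟩ := ih x v hd
          exact ⟨SimpleGraph.Walk.cons hadj w, by simpa using hw⟩
        · have hlt : v.2.val < u.2.val := by omega
          set x : Fin m × Fin n := (u.1, ⟨u.2.val - 1, by have := u.2.isLt; omega⟩) with hx
          have hadj : (gridGraph m n).Adj u x := by
            refine SimpleGraph.boxProd_adj.mpr (Or.inr ⟨?_, rfl⟩)
            exact SimpleGraph.pathGraph_adj.mpr (Or.inr (by show u.2.val - 1 + 1 = u.2.val; omega))
          have hd : d2 x v ≤ k := by simp only [d2, Nat.dist, hx] at *; omega
          obtain ⟨w, hw⟩ := ih x v hd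
          exact ⟨SimpleGraph.Walk.cons hadj w, by simpa using hw⟩

lemma grid_dist {m n : ℕ} (u v : Fin m × Fin n) :
    (gridGraph m n).dist u v = d2 u v := by
  obtain ⟨w, hw⟩ := exists_walk_d2 (d2 u v) u v le_rfl
  refine le_antisymm (le_trans (SimpleGraph.dist_le w) hw) ?_
  obtain ⟨w', hw'⟩ := (SimpleGraph.Walk.reachable w).exists_walk_length_eq_dist
  exact hw' ▸ d2_le_walk w'

lemma geoHull_subset {V : Type} (G : SimpleGraph V) {S K : Set V}
    (hK : geoConvex G K) (hS : S ⊆ K) : geoHull G S ⊆ K :=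
  Set.sInter_subset_of_mem ⟨hK, hS⟩

lemma hull_univ_iff {m n : ℕ} (hm : 1 ≤ m) (hn : 1 ≤ n) (S : Set (Fin m × Fin n)) :
    geoHull (gridGraph m n) S = Set.univ ↔
      (∃ u ∈ S, u.1.val = 0) ∧ (∃ u ∈ S, u.1.val = m - 1) ∧
      (∃ u ∈ S, u.2.val = 0) ∧ (∃ u ∈ S, u.2.val = n - 1) := by
  constructor
  · intro hEq
    refine ⟨?_, ?_, ?_, ?_⟩
    · by_contra h
      push_neg at h
      have hK : geoConvex (gridGraph m n) {v : Fin m × Fin n | v.1.val ≠ 0} := by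
        intro u hu v hv w hw
        rw [grid_dist, grid_dist, grid_dist] at hw
        simp only [d2, Nat.dist] at hw
        simp only [Set.mem_setOf_eq] at *
        omega
      have hsub := geoHull_subset (gridGraph m n) hK h
      rw [hEq] at hsub
      exact hsub (Set.mem_univ ((⟨0, by omega⟩, ⟨0, by omega⟩) : Fin m × Fin n)) rfl
    · by_contra h
      push_neg at h
      have hK : geoConvex (gridGraph m n) {v : Fin m × Fin n | v.1.val ≠ m - 1} := by
        intro u hu v hv w hw
        rw [grid_dist, grid_dist, grid_dist] at hw
        simp only [d2, Nat.dist] at hw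
        simp only [Set.mem_setOf_eq] at *
        have := u.1.isLt; have := v.1.isLt
        omega
      have hsub := geoHull_subset (gridGraph m n) hK h
      rw [hEq] at hsub
      exact hsub (Set.mem_univ ((⟨m - 1, by omega⟩, ⟨0, by omega⟩) : Fin m × Fin n)) rfl
    · by_contra h
      push_neg at h
      have hK : geoConvex (gridGraph m n) {v : Fin m × Fin n | v.2.val ≠ 0} := by
        intro u hu v hv w hw
        rw [grid_dist, grid_dist, grid_dist] at hw
        simp only [d2, Nat.dist] at hw
        simp only [Set.mem_setOf_eq] at *
        omega
      have hsub := geoHull_subset (gridGraph m n) hK h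
      rw [hEq] at hsub
      exact hsub (Set.mem_univ ((⟨0, by omega⟩, ⟨0, by omega⟩) : Fin m × Fin n)) rfl
    · by_contra h
      push_neg at h
      have hK : geoConvex (gridGraph m n) {v : Fin m × Fin n | v.2.val ≠ n - 1} := by
        intro u hu v hv w hw
        rw [grid_dist, grid_dist, grid_dist] at hw
        simp only [d2, Nat.dist] at hw
        simp only [Set.mem_setOf_eq] at *
        have := u.2.isLt; have := v.2.isLt
        omega
      have hsub := geoHull_subset (gridGraph m n) hK h
      rw [hEq] at hsub
      exact hsub (Set.mem_univ ((⟨0, by omega⟩, ⟨n - 1, by omega⟩) : Fin m × Fin n)) rfl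
  · rintro ⟨⟨a, haS, ha⟩, ⟨b, hbS, hb⟩, ⟨c, hcS, hc⟩, ⟨d, hdS, hd⟩⟩
    apply Set.eq_univ_of_univ_subset
    intro x _
    rw [geoHull, Set.mem_sInter]
    rintro K ⟨hK, hSK⟩
    have hbl := b.1.isLt; have hdl := d.2.isLt
    have hx1 := x.1.isLt; have hx2 := x.2.isLt
    have c00 : ((⟨0, by omega⟩, ⟨0, by omega⟩) : Fin m × Fin n) ∈ K := by
      refine hK a (hSK haS) c (hSK hcS) _ ?_
      rw [grid_dist, grid_dist, grid_dist]
      simp only [d2, Nat.dist, ha, hc]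
      omega
    have c11 : ((⟨m - 1, by omega⟩, ⟨n - 1, by omega⟩) : Fin m × Fin n) ∈ K := by
      refine hK b (hSK hbS) d (hSK hdS) _ ?_
      rw [grid_dist, grid_dist, grid_dist]
      simp only [d2, Nat.dist, hb, hd]
      omega
    refine hK _ c00 _ c11 x ?_
    rw [grid_dist, grid_dist, grid_dist]
    simp only [d2, Nat.dist]
    omega


section CountLemmas
variable {m n : ℕ}

lemma regIdx_eq_zero_iff (hm : 2 ≤ m) (i : Fin m) : regIdx m i = 0 ↔ i.val = 0 := by
  unfold regIdx
  split_ifs with h1 h2 <;> simp_all <;> omega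

lemma regIdx_eq_two_iff (hm : 2 ≤ m) (i : Fin m) : regIdx m i = 2 ↔ i.val = m - 1 := by
  unfold regIdx
  split_ifs with h1 h2 <;> simp_all <;> omega

lemma fin3_cases (b : Fin 3) : b = 0 ∨ b = 1 ∨ b = 2 := by fin_cases b <;> simp

lemma alpha_entry_pos_iff (P : Finset (Fin m × Fin n)) (i j : Fin 3) :
    0 < alphaMap m n P i j ↔ ∃ v, v ∉ P ∧ regIdx m v.1 = i ∧ regIdx n v.2 = j := by
  rw [alphaMap, Finset.card_pos]
  constructor
  · rintro ⟨v, hv⟩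
    rw [Finset.mem_filter] at hv
    exact ⟨v, hv.2⟩
  · rintro ⟨v, hv⟩
    exact ⟨v, Finset.mem_filter.mpr ⟨Finset.mem_univ _, hv⟩⟩

lemma rowsum_pos_iff (P : Finset (Fin m × Fin n)) (a : Fin 3) :
    0 < alphaMap m n P a 0 + alphaMap m n P a 1 + alphaMap m n P a 2 ↔
      ∃ v, v ∉ P ∧ regIdx m v.1 = a := by
  constructor
  · intro h
    by_contra hc
    push_neg at hc
    have hz : ∀ j, alphaMap m n P a j = 0 := by
      intro j
      rw [alphaMap, Finset.card_eq_zero, Finset.filter_eq_empty_iff]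
      rintro v - ⟨h1, h2, -⟩
      exact hc v h1 h2
    have := hz 0; have := hz 1; have := hz 2
    omega
  · rintro ⟨v, hvP, hreg⟩
    have hp : 0 < alphaMap m n P a (regIdx n v.2) :=
      (alpha_entry_pos_iff P a _).mpr ⟨v, hvP, hreg, rfl⟩
    rcases fin3_cases (regIdx n v.2) with h | h | h <;> rw [h] at hp <;> omega

lemma colsum_pos_iff (P : Finset (Fin m × Fin n)) (b : Fin 3) :
    0 < alphaMap m n P 0 b + alphaMap m n P 1 b + alphaMap m n P 2 b ↔
      ∃ v, v ∉ P ∧ regIdx n v.2 = b := by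
  constructor
  · intro h
    by_contra hc
    push_neg at hc
    have hz : ∀ i, alphaMap m n P i b = 0 := by
      intro i
      rw [alphaMap, Finset.card_eq_zero, Finset.filter_eq_empty_iff]
      rintro v - ⟨h1, -, h2⟩
      exact hc v h1 h2
    have := hz 0; have := hz 1; have := hz 2
    omega
  · rintro ⟨v, hvP, hreg⟩
    have hp : 0 < alphaMap m n P (regIdx m v.1) b :=
      (alpha_entry_pos_iff P _ b).mpr ⟨v, hvP, rfl, hreg⟩
    rcases fin3_cases (regIdx m v.1) with h | h | h <;> rw [h] at hp <;> omega

lemma hull_iff_edgeOK (hm : 2 ≤ m) (hn : 2 ≤ n) (P : Finset (Fin m × Fin n)) :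
    geoHull (gridGraph m n) ((↑P : Set (Fin m × Fin n))ᶜ) = Set.univ ↔
      edgeOK (alphaMap m n P) := by
  rw [hull_univ_iff (by omega) (by omega), edgeOK]
  simp only [rowsum_pos_iff, colsum_pos_iff, Set.mem_compl_iff, Finset.mem_coe,
    regIdx_eq_zero_iff hm, regIdx_eq_two_iff hm, regIdx_eq_zero_iff hn, regIdx_eq_two_iff hn]

lemma alpha_insert {P : Finset (Fin m × Fin n)} {v : Fin m × Fin n} (hv : v ∉ P) :
    alphaMap m n (insert v P) = decEntry (alphaMap m n P) (regIdx m v.1) (regIdx n v.2) := by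
  funext a b
  have hset : (Finset.univ.filter
        (fun w : Fin m × Fin n => w ∉ insert v P ∧ regIdx m w.1 = a ∧ regIdx n w.2 = b)) =
      (Finset.univ.filter
        (fun w : Fin m × Fin n => w ∉ P ∧ regIdx m w.1 = a ∧ regIdx n w.2 = b)).erase v := by
    ext w
    simp only [Finset.mem_filter, Finset.mem_erase, Finset.mem_insert, Finset.mem_univ,
      true_and, not_or]
    tauto
  simp only [alphaMap, decEntry, hset]
  by_cases hc : a = regIdx m v.1 ∧ b = regIdx n v.2
  · rw [if_pos hc]
    have hvmem : v ∈ Finset.univ.filter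
        (fun w : Fin m × Fin n => w ∉ P ∧ regIdx m w.1 = a ∧ regIdx n w.2 = b) :=
      Finset.mem_filter.mpr ⟨Finset.mem_univ _, hv, hc.1.symm, hc.2.symm⟩
    rw [Finset.card_erase_of_mem hvmem]
  · rw [if_neg hc, Finset.erase_eq_of_notMem]
    intro hmem
    rw [Finset.mem_filter] at hmem
    exact hc ⟨hmem.2.2.1.symm, hmem.2.2.2.symm⟩

lemma filter_reg_card_zero (hm : 2 ≤ m) :
    (Finset.univ.filter (fun i : Fin m => regIdx m i = 0)).card = 1 := by
  have h : Finset.univ.filter (fun i : Fin m => regIdx m i = 0)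
      = {(⟨0, by omega⟩ : Fin m)} := by
    ext i
    simp [regIdx_eq_zero_iff hm, Fin.ext_iff]
  rw [h, Finset.card_singleton]

lemma filter_reg_card_two (hm : 2 ≤ m) :
    (Finset.univ.filter (fun i : Fin m => regIdx m i = 2)).card = 1 := by
  have h : Finset.univ.filter (fun i : Fin m => regIdx m i = 2)
      = {(⟨m - 1, by omega⟩ : Fin m)} := by
    ext i
    simp [regIdx_eq_two_iff hm, Fin.ext_iff]
  rw [h, Finset.card_singleton]

lemma filter_reg_card_one (hm : 2 ≤ m) :
    (Finset.univ.filter (fun i : Fin m => regIdx m i = 1)).card = m - 2 := by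
  have htot := Finset.card_eq_sum_card_fiberwise
    (f := regIdx m) (s := (Finset.univ : Finset (Fin m))) (t := Finset.univ)
    (fun x _ => Finset.mem_univ _)
  rw [Finset.card_univ, Fintype.card_fin, Fin.sum_univ_three] at htot
  have h0 := filter_reg_card_zero hm
  have h2 := filter_reg_card_two hm
  omega

lemma alpha_empty_entry (a b : Fin 3) :
    alphaMap m n (∅ : Finset (Fin m × Fin n)) a b =
      (Finset.univ.filter (fun i : Fin m => regIdx m i = a)).card *
      (Finset.univ.filter (fun j : Fin n => regIdx n j = b)).card := by
  simp only [alphaMap, Finset.notMem_empty, not_false_iff, true_and]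
  have hsplit : Finset.univ.filter (fun v : Fin m × Fin n => regIdx m v.1 = a ∧ regIdx n v.2 = b)
      = (Finset.univ.filter (fun i : Fin m => regIdx m i = a)) ×ˢ
        (Finset.univ.filter (fun j : Fin n => regIdx n j = b)) := by
    ext w
    simp [Finset.mem_filter, Finset.mem_product]
  rw [hsplit, Finset.card_product]

lemma alpha_empty (hm : 2 ≤ m) (hn : 2 ≤ n) :
    alphaMap m n (∅ : Finset (Fin m × Fin n)) =
      ![![1, n - 2, 1], ![m - 2, (m - 2) * (n - 2), m - 2], ![1, n - 2, 1]] := by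
  funext a b
  fin_cases a <;> fin_cases b <;>
    simp [alpha_empty_entry, filter_reg_card_zero hm, filter_reg_card_one hm,
      filter_reg_card_two hm, filter_reg_card_zero hn, filter_reg_card_one hn,
      filter_reg_card_two hn]

end CountLemmas

/-- The map `α` is an option preserving map from the gamegraph of
`DNT(P_m □ P_n)` onto the gamegraph of the matrix game `DNT(M)`, where `M`,
the image of the starting position, is the matrix
`[[1, n-2, 1], [m-2, (m-2)(n-2), m-2], [1, n-2, 1]]`; ontoness is expressed by
saying that every subposition of `M` in `DNT(M)` lies in the image of `α`. -/
theorem alpha_optionPreserving_DNT (m n : ℕ) (hm : 2 ≤ m) (hmn : m ≤ n) (hn : 3 ≤ n) :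
    OptionPreserving (DNTgame (gridGraph m n)) (DNTmat ![![1, n - 2, 1], ![m - 2, (m - 2) * (n - 2), m - 2], ![1, n - 2, 1]])
      (alphaMap m n) ∧
    alphaMap m n (∅ : Finset (Fin m × Fin n)) = ![![1, n - 2, 1], ![m - 2, (m - 2) * (n - 2), m - 2], ![1, n - 2, 1]] ∧
    (∀ N : Mat3,
      Relation.ReflTransGen (fun X Y => Y ∈ DNTmatOpt X) ![![1, n - 2, 1], ![m - 2, (m - 2) * (n - 2), m - 2], ![1, n - 2, 1]] N →
      ∃ P : Finset (Fin m × Fin n), alphaMap m n P = N) := by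
  have hm2 : 2 ≤ m := hm
  have hn2 : 2 ≤ n := by omega
  refine ⟨?_, alpha_empty hm2 hn2, ?_⟩
  · intro P
    ext N
    show N ∈ DNTmatOpt (alphaMap m n P) ↔ N ∈ alphaMap m n '' DNTgraphOpt (gridGraph m n) P
    constructor
    · rintro ⟨⟨i, j, hpos, rfl⟩, hedge⟩
      obtain ⟨v, hvP, hri, hrj⟩ := (alpha_entry_pos_iff P i j).mp hpos
      have halpha : alphaMap m n (insert v P) = decEntry (alphaMap m n P) i j := by
        rw [alpha_insert hvP, hri, hrj]
      refine ⟨insert v P, ⟨v, hvP, rfl, ?_⟩, halpha⟩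
      rw [hull_iff_edgeOK hm2 hn2, halpha]
      exact hedge
    · rintro ⟨Q, ⟨v, hvP, rfl, hhull⟩, rfl⟩
      refine ⟨⟨regIdx m v.1, regIdx n v.2,
        (alpha_entry_pos_iff P _ _).mpr ⟨v, hvP, rfl, rfl⟩, alpha_insert hvP⟩, ?_⟩
      rw [← hull_iff_edgeOK hm2 hn2]
      exact hhull
  · intro N h
    induction h with
    | refl => exact ⟨∅, alpha_empty hm2 hn2⟩
    | tail h1 h2 ih =>
      obtain ⟨P, hP⟩ := ih
      obtain ⟨⟨i, j, hpos, rfl⟩, -⟩ := h2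
      rw [← hP] at hpos
      obtain ⟨v, hvP, hri, hrj⟩ := (alpha_entry_pos_iff P i j).mp hpos
      exact ⟨insert v P, by rw [alpha_insert hvP, hri, hrj, hP]⟩
end

section
/- Let 2 ≤ m ≤ n with 3 ≤ n and let M = [[1, n−2, 1], [m−2, (m−2)(n−2), m−2], [1, n−2, 1]]. Then nim(DNT(P_m□P_n)) = nim(DNT(M)) and nim(TER(P_m□P_n)) = nim(TER(M)). -/
namespace GridNimAux
open SimpleGraph

/-! ### Nim machinery -/

lemma nim_fix (G : GameGraph) (p : G.Pos) :
    G.nim p = mex {k : ℕ | ∃ q, ∃ _ : q ∈ G.opt p, G.nim q = k} :=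
  G.wf.fix_eq _ p

lemma nim_transfer (G H : GameGraph) (f : G.Pos → H.Pos)
    (hf : ∀ p, H.opt (f p) = f '' G.opt p) (p : G.Pos) :
    H.nim (f p) = G.nim p := by
  induction p using G.wf.induction with
  | _ p ih =>
    rw [nim_fix, nim_fix]
    congr 1
    ext k
    simp only [Set.mem_setOf_eq]
    constructor
    · rintro ⟨q, hq, rfl⟩
      rw [hf] at hq
      obtain ⟨q', hq', rfl⟩ := hq
      exact ⟨q', hq', (ih q' hq').symm⟩
    · rintro ⟨q, hq, rfl⟩
      exact ⟨f q, (hf p) ▸ Set.mem_image_of_mem f hq, ih q hq⟩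

/-! ### Distance in the grid graph -/

lemma pathGraph_adj_dist {k : ℕ} {u v : Fin k} (h : (pathGraph k).Adj u v) :
    Nat.dist u.val v.val = 1 := by
  rw [pathGraph_adj] at h
  rcases h with h | h <;> simp [Nat.dist] <;> omega

lemma grid_walk_length_ge {m n : ℕ} {u v : Fin m × Fin n} (w : (gridGraph m n).Walk u v) :
    Nat.dist u.1 v.1 + Nat.dist u.2 v.2 ≤ w.length := by
  induction w with
  | nil => simp [Nat.dist_self]
  | @cons a x c h w ih =>
    rw [Walk.length_cons]
    have h1 := Nat.dist.triangle_inequality (a.1 : ℕ) (x.1 : ℕ) (c.1 : ℕ)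
    have h2 := Nat.dist.triangle_inequality (a.2 : ℕ) (x.2 : ℕ) (c.2 : ℕ)
    rcases (SimpleGraph.boxProd_adj.mp h) with ⟨hadj, heq⟩ | ⟨hadj, heq⟩
    · have := pathGraph_adj_dist hadj
      have : Nat.dist (a.2 : ℕ) (x.2 : ℕ) = 0 := by rw [heq]; exact Nat.dist_self _
      omega
    · have := pathGraph_adj_dist hadj
      have : Nat.dist (a.1 : ℕ) (x.1 : ℕ) = 0 := by rw [heq]; exact Nat.dist_self _
      omega

lemma pathGraph_walk_aux {k : ℕ} : ∀ (d : ℕ) (u v : Fin k), u.val + d = v.val →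
    ∃ w : (pathGraph k).Walk u v, w.length = d := by
  intro d
  induction d with
  | zero =>
    intro u v h
    have : u = v := Fin.ext (by omega)
    subst this
    exact ⟨.nil, rfl⟩
  | succ d ih =>
    intro u v h
    have hu1 : u.val + 1 < k := by have := v.isLt; omega
    obtain ⟨w, hw⟩ := ih ⟨u.val + 1, hu1⟩ v (by simpa using by omega)
    exact ⟨.cons (pathGraph_adj.2 (Or.inl rfl)) w, by simp [hw]⟩

lemma pathGraph_walk {k : ℕ} (u v : Fin k) :
    ∃ w : (pathGraph k).Walk u v, w.length = Nat.dist u.val v.val := by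
  rcases le_or_gt u.val v.val with h | h
  · obtain ⟨w, hw⟩ := pathGraph_walk_aux (v.val - u.val) u v (by omega)
    exact ⟨w, by rw [hw, Nat.dist]; omega⟩
  · obtain ⟨w, hw⟩ := pathGraph_walk_aux (u.val - v.val) v u (by omega)
    exact ⟨w.reverse, by rw [Walk.length_reverse, hw, Nat.dist]; omega⟩

lemma grid_dist {m n : ℕ} (u v : Fin m × Fin n) :
    (gridGraph m n).dist u v = Nat.dist u.1 v.1 + Nat.dist u.2 v.2 := by
  obtain ⟨w1, hw1⟩ := pathGraph_walk u.1 v.1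
  obtain ⟨w2, hw2⟩ := pathGraph_walk u.2 v.2
  obtain ⟨wgrid, hwlen⟩ : ∃ w : (gridGraph m n).Walk u v,
      w.length = Nat.dist u.1 v.1 + Nat.dist u.2 v.2 :=
    ⟨((w1.boxProdLeft (pathGraph n) u.2).append (w2.boxProdRight (pathGraph m) v.1)).copy
      (by simp) (by simp),
     by erw [Walk.length_copy, Walk.length_append, Walk.boxProdLeft, Walk.boxProdRight, Walk.length_map, Walk.length_map, hw1, hw2]⟩
  have hle : (gridGraph m n).dist u v ≤ Nat.dist u.1 v.1 + Nat.dist u.2 v.2 :=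
    hwlen ▸ SimpleGraph.dist_le wgrid
  have hge : Nat.dist u.1 v.1 + Nat.dist u.2 v.2 ≤ (gridGraph m n).dist u v := by
    by_cases huv : u = v
    · subst huv; simp [Nat.dist_self]
    · have hreach : (gridGraph m n).Reachable u v := ⟨wgrid⟩
      have hne : (gridGraph m n).dist u v ≠ 0 := by
        rw [Ne, SimpleGraph.dist_eq_zero_iff_eq_or_not_reachable]
        push_neg
        exact ⟨huv, hreach⟩
      obtain ⟨p, hp⟩ := SimpleGraph.exists_walk_of_dist_ne_zero hne
      calc Nat.dist u.1 v.1 + Nat.dist u.2 v.2 ≤ p.length := grid_walk_length_ge p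
        _ = _ := hp
  omega

/-! ### Hull characterization -/

lemma row_side_convex (m n : ℕ) (c : ℕ) (hc : c = 0 ∨ c = m - 1) :
    geoConvex (gridGraph m n) {p : Fin m × Fin n | (p.1 : ℕ) ≠ c} := by
  intro u hu v hv w hw
  simp only [Set.mem_setOf_eq] at *
  rw [grid_dist, grid_dist, grid_dist] at hw
  intro hwc
  have h1 := u.1.isLt; have h2 := v.1.isLt; have h3 := w.1.isLt
  simp only [Nat.dist] at hw
  omega

lemma col_side_convex (m n : ℕ) (c : ℕ) (hc : c = 0 ∨ c = n - 1) :
    geoConvex (gridGraph m n) {p : Fin m × Fin n | (p.2 : ℕ) ≠ c} := by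
  intro u hu v hv w hw
  simp only [Set.mem_setOf_eq] at *
  rw [grid_dist, grid_dist, grid_dist] at hw
  intro hwc
  have h1 := u.2.isLt; have h2 := v.2.isLt; have h3 := w.2.isLt
  simp only [Nat.dist] at hw
  omega

lemma geoHull_univ_iff {m n : ℕ} (hm : 2 ≤ m) (hn : 2 ≤ n) (S : Set (Fin m × Fin n)) :
    geoHull (gridGraph m n) S = Set.univ ↔
      ((∃ a ∈ S, (a.1 : ℕ) = 0) ∧ (∃ a ∈ S, (a.1 : ℕ) = m - 1) ∧
       (∃ a ∈ S, (a.2 : ℕ) = 0) ∧ (∃ a ∈ S, (a.2 : ℕ) = n - 1)) := by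
  have hm0 : 0 < m := by omega
  have hn0 : 0 < n := by omega
  have hm1 : m - 1 < m := by omega
  have hn1 : n - 1 < n := by omega
  constructor
  · intro h
    have key : ∀ (K : Set (Fin m × Fin n)), geoConvex (gridGraph m n) K → S ⊆ K →
        ∀ p, p ∈ K := by
      intro K hKc hKs p
      have : geoHull (gridGraph m n) S ⊆ K := Set.sInter_subset_of_mem ⟨hKc, hKs⟩
      rw [h] at this
      exact this (Set.mem_univ p)
    refine ⟨?_, ?_, ?_, ?_⟩
    · by_contra hcon; push_neg at hcon
      exact key _ (row_side_convex m n 0 (Or.inl rfl)) (fun a ha => hcon a ha)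
        (⟨0, hm0⟩, ⟨0, hn0⟩) rfl
    · by_contra hcon; push_neg at hcon
      exact key _ (row_side_convex m n (m-1) (Or.inr rfl)) (fun a ha => hcon a ha)
        (⟨m-1, hm1⟩, ⟨0, hn0⟩) rfl
    · by_contra hcon; push_neg at hcon
      exact key _ (col_side_convex m n 0 (Or.inl rfl)) (fun a ha => hcon a ha)
        (⟨0, hm0⟩, ⟨0, hn0⟩) rfl
    · by_contra hcon; push_neg at hcon
      exact key _ (col_side_convex m n (n-1) (Or.inr rfl)) (fun a ha => hcon a ha)
        (⟨0, hm0⟩, ⟨n-1, hn1⟩) rfl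
  · rintro ⟨⟨t, htS, ht⟩, ⟨b, hbS, hb⟩, ⟨l, hlS, hl⟩, ⟨r, hrS, hr⟩⟩
    rw [Set.eq_univ_iff_forall]
    intro w
    rw [geoHull, Set.mem_sInter]
    rintro K ⟨hKc, hKs⟩
    have htl := t.2.isLt; have hbl := b.2.isLt; have hll := l.1.isLt; have hrl := r.1.isLt
    have hw1 := w.1.isLt; have hw2 := w.2.isLt
    have h00 : ((⟨0, hm0⟩, ⟨0, hn0⟩) : Fin m × Fin n) ∈ K := by
      refine hKc t (hKs htS) l (hKs hlS) _ ?_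
      rw [grid_dist, grid_dist, grid_dist]
      simp only [Nat.dist]
      omega
    have h01 : ((⟨0, hm0⟩, ⟨n-1, hn1⟩) : Fin m × Fin n) ∈ K := by
      refine hKc t (hKs htS) r (hKs hrS) _ ?_
      rw [grid_dist, grid_dist, grid_dist]
      simp only [Nat.dist]
      omega
    have h10 : ((⟨m-1, hm1⟩, ⟨0, hn0⟩) : Fin m × Fin n) ∈ K := by
      refine hKc b (hKs hbS) l (hKs hlS) _ ?_
      rw [grid_dist, grid_dist, grid_dist]
      simp only [Nat.dist]
      omega
    have h11 : ((⟨m-1, hm1⟩, ⟨n-1, hn1⟩) : Fin m × Fin n) ∈ K := by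
      refine hKc b (hKs hbS) r (hKs hrS) _ ?_
      rw [grid_dist, grid_dist, grid_dist]
      simp only [Nat.dist]
      omega
    have hTop : ((⟨0, hm0⟩, w.2) : Fin m × Fin n) ∈ K := by
      refine hKc _ h00 _ h01 _ ?_
      rw [grid_dist, grid_dist, grid_dist]
      simp only [Nat.dist]
      omega
    have hBot : ((⟨m-1, hm1⟩, w.2) : Fin m × Fin n) ∈ K := by
      refine hKc _ h10 _ h11 _ ?_
      rw [grid_dist, grid_dist, grid_dist]
      simp only [Nat.dist]
      omega
    refine hKc _ hTop _ hBot w ?_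
    rw [grid_dist, grid_dist, grid_dist]
    simp only [Nat.dist]
    omega

/-! ### Counting unselected vertices by class -/

def rcl (m : ℕ) (x : Fin m) : Fin 3 :=
  if (x : ℕ) = 0 then 0 else if (x : ℕ) = m - 1 then 2 else 1

lemma rcl_eq_zero_iff {m : ℕ} (x : Fin m) : rcl m x = 0 ↔ (x : ℕ) = 0 := by
  unfold rcl; split_ifs <;> simp_all

lemma rcl_eq_two_iff {m : ℕ} (hm : 2 ≤ m) (x : Fin m) : rcl m x = 2 ↔ (x : ℕ) = m - 1 := by
  unfold rcl; split_ifs <;> simp_all <;> omega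

lemma rcl_eq_one_iff {m : ℕ} (x : Fin m) : rcl m x = 1 ↔ ((x : ℕ) ≠ 0 ∧ (x : ℕ) ≠ m - 1) := by
  unfold rcl; split_ifs <;> simp_all

def cnt (m n : ℕ) (P : Finset (Fin m × Fin n)) : Mat3 := fun i j =>
  (Finset.univ.filter (fun v : Fin m × Fin n => v ∉ P ∧ rcl m v.1 = i ∧ rcl n v.2 = j)).card

lemma cnt_pos_iff {m n : ℕ} (P : Finset (Fin m × Fin n)) (i j : Fin 3) :
    0 < cnt m n P i j ↔ ∃ v, v ∉ P ∧ rcl m v.1 = i ∧ rcl n v.2 = j := by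
  rw [cnt, Finset.card_pos, Finset.filter_nonempty_iff]
  simp

lemma fin3_cases (a : Fin 3) : a = 0 ∨ a = 1 ∨ a = 2 := by omega

lemma row_sum_pos_iff {m n : ℕ} (P : Finset (Fin m × Fin n)) (i : Fin 3) :
    0 < cnt m n P i 0 + cnt m n P i 1 + cnt m n P i 2 ↔
      ∃ v, v ∉ P ∧ rcl m v.1 = i := by
  constructor
  · intro h
    have : 0 < cnt m n P i 0 ∨ 0 < cnt m n P i 1 ∨ 0 < cnt m n P i 2 := by omega
    rcases this with h | h | h <;>
      · obtain ⟨v, hv, h1, _⟩ := (cnt_pos_iff P i _).mp h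
        exact ⟨v, hv, h1⟩
  · rintro ⟨v, hv, h1⟩
    rcases fin3_cases (rcl n v.2) with h2 | h2 | h2 <;>
      · have := (cnt_pos_iff P i _).mpr ⟨v, hv, h1, h2⟩
        omega

lemma col_sum_pos_iff {m n : ℕ} (P : Finset (Fin m × Fin n)) (j : Fin 3) :
    0 < cnt m n P 0 j + cnt m n P 1 j + cnt m n P 2 j ↔
      ∃ v, v ∉ P ∧ rcl n v.2 = j := by
  constructor
  · intro h
    have : 0 < cnt m n P 0 j ∨ 0 < cnt m n P 1 j ∨ 0 < cnt m n P 2 j := by omega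
    rcases this with h | h | h <;>
      · obtain ⟨v, hv, _, h2⟩ := (cnt_pos_iff P _ j).mp h
        exact ⟨v, hv, h2⟩
  · rintro ⟨v, hv, h2⟩
    rcases fin3_cases (rcl m v.1) with h1 | h1 | h1 <;>
      · have := (cnt_pos_iff P _ j).mpr ⟨v, hv, h1, h2⟩
        omega

lemma edgeOK_cnt_iff {m n : ℕ} (hm : 2 ≤ m) (hn : 2 ≤ n) (P : Finset (Fin m × Fin n)) :
    edgeOK (cnt m n P) ↔ geoHull (gridGraph m n) ((↑P : Set (Fin m × Fin n))ᶜ) = Set.univ := by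
  rw [geoHull_univ_iff hm hn]
  unfold edgeOK
  have hmem : ∀ a : Fin m × Fin n, a ∈ ((↑P : Set (Fin m × Fin n))ᶜ) ↔ a ∉ P := by
    intro a; simp
  rw [row_sum_pos_iff P 0, row_sum_pos_iff P 2, col_sum_pos_iff P 0, col_sum_pos_iff P 2]
  constructor
  · rintro ⟨⟨v1, h1, hr1⟩, ⟨v2, h2, hr2⟩, ⟨v3, h3, hr3⟩, ⟨v4, h4, hr4⟩⟩
    exact ⟨⟨v1, (hmem v1).mpr h1, (rcl_eq_zero_iff _).mp hr1⟩,
           ⟨v2, (hmem v2).mpr h2, (rcl_eq_two_iff hm _).mp hr2⟩,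
           ⟨v3, (hmem v3).mpr h3, (rcl_eq_zero_iff _).mp hr3⟩,
           ⟨v4, (hmem v4).mpr h4, (rcl_eq_two_iff hn _).mp hr4⟩⟩
  · rintro ⟨⟨v1, h1, hr1⟩, ⟨v2, h2, hr2⟩, ⟨v3, h3, hr3⟩, ⟨v4, h4, hr4⟩⟩
    exact ⟨⟨v1, (hmem v1).mp h1, (rcl_eq_zero_iff _).mpr hr1⟩,
           ⟨v2, (hmem v2).mp h2, (rcl_eq_two_iff hm _).mpr hr2⟩,
           ⟨v3, (hmem v3).mp h3, (rcl_eq_zero_iff _).mpr hr3⟩,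
           ⟨v4, (hmem v4).mp h4, (rcl_eq_two_iff hn _).mpr hr4⟩⟩

lemma cnt_insert {m n : ℕ} (P : Finset (Fin m × Fin n)) {v : Fin m × Fin n} (hv : v ∉ P) :
    cnt m n (insert v P) = decEntry (cnt m n P) (rcl m v.1) (rcl n v.2) := by
  funext i j
  unfold decEntry
  by_cases hij : i = rcl m v.1 ∧ j = rcl n v.2
  · rw [if_pos hij]
    obtain ⟨rfl, rfl⟩ := hij
    unfold cnt
    have hset : (Finset.univ.filter
        (fun w : Fin m × Fin n => w ∉ insert v P ∧ rcl m w.1 = rcl m v.1 ∧ rcl n w.2 = rcl n v.2)) =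
        (Finset.univ.filter
        (fun w : Fin m × Fin n => w ∉ P ∧ rcl m w.1 = rcl m v.1 ∧ rcl n w.2 = rcl n v.2)).erase v := by
      ext w
      simp only [Finset.mem_filter, Finset.mem_erase, Finset.mem_insert, Finset.mem_univ,
        true_and, not_or]
      tauto
    rw [hset, Finset.card_erase_of_mem]
    simp [hv]
  · rw [if_neg hij]
    unfold cnt
    congr 1
    ext w
    simp only [Finset.mem_filter, Finset.mem_insert, Finset.mem_univ, true_and, not_or]
    constructor
    · rintro ⟨⟨_, hP⟩, hc⟩; exact ⟨hP, hc⟩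
    · rintro ⟨hP, hc⟩
      refine ⟨⟨?_, hP⟩, hc⟩
      rintro rfl
      exact hij ⟨hc.1.symm, hc.2.symm⟩

/-! ### Option correspondences -/

lemma DNT_opt_eq {m n : ℕ} (hm : 2 ≤ m) (hn : 2 ≤ n) (P : Finset (Fin m × Fin n)) :
    DNTmatOpt (cnt m n P) = cnt m n '' DNTgraphOpt (gridGraph m n) P := by
  ext N
  constructor
  · rintro ⟨⟨i, j, hpos, rfl⟩, hok⟩
    obtain ⟨v, hvP, hv1, hv2⟩ := (cnt_pos_iff P i j).mp hpos
    have hc : cnt m n (insert v P) = decEntry (cnt m n P) i j := by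
      rw [cnt_insert P hvP, hv1, hv2]
    refine ⟨insert v P, ⟨v, hvP, rfl, ?_⟩, hc⟩
    rw [← edgeOK_cnt_iff hm hn, hc]
    exact hok
  · rintro ⟨Q, ⟨v, hvP, rfl, hhull⟩, rfl⟩
    have hc := cnt_insert P hvP
    refine ⟨⟨rcl m v.1, rcl n v.2, (cnt_pos_iff P _ _).mpr ⟨v, hvP, rfl, rfl⟩, hc⟩, ?_⟩
    exact (edgeOK_cnt_iff hm hn _).mpr hhull

lemma TER_opt_eq {m n : ℕ} (hm : 2 ≤ m) (hn : 2 ≤ n) (P : Finset (Fin m × Fin n)) :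
    TERmatOpt (cnt m n P) = cnt m n '' TERgraphOpt (gridGraph m n) P := by
  ext N
  constructor
  · rintro ⟨hok, ⟨i, j, hpos, rfl⟩⟩
    obtain ⟨v, hvP, hv1, hv2⟩ := (cnt_pos_iff P i j).mp hpos
    have hc : cnt m n (insert v P) = decEntry (cnt m n P) i j := by
      rw [cnt_insert P hvP, hv1, hv2]
    exact ⟨insert v P, ⟨(edgeOK_cnt_iff hm hn P).mp hok, v, hvP, rfl⟩, hc⟩
  · rintro ⟨Q, ⟨hhull, v, hvP, rfl⟩, rfl⟩
    exact ⟨(edgeOK_cnt_iff hm hn P).mpr hhull,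
      rcl m v.1, rcl n v.2, (cnt_pos_iff P _ _).mpr ⟨v, hvP, rfl, rfl⟩, cnt_insert P hvP⟩

/-! ### The starting count -/

lemma card_rcl_zero {m : ℕ} (hm : 2 ≤ m) :
    (Finset.univ.filter (fun x : Fin m => rcl m x = 0)).card = 1 := by
  have : (Finset.univ.filter (fun x : Fin m => rcl m x = 0)) = {⟨0, by omega⟩} := by
    ext x
    simp only [Finset.mem_filter, Finset.mem_univ, true_and, Finset.mem_singleton,
      rcl_eq_zero_iff]
    exact ⟨fun h => Fin.ext h, fun h => h ▸ rfl⟩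
  rw [this, Finset.card_singleton]

lemma card_rcl_two {m : ℕ} (hm : 2 ≤ m) :
    (Finset.univ.filter (fun x : Fin m => rcl m x = 2)).card = 1 := by
  have : (Finset.univ.filter (fun x : Fin m => rcl m x = 2)) = {⟨m - 1, by omega⟩} := by
    ext x
    simp only [Finset.mem_filter, Finset.mem_univ, true_and, Finset.mem_singleton,
      rcl_eq_two_iff hm]
    exact ⟨fun h => Fin.ext h, fun h => h ▸ rfl⟩
  rw [this, Finset.card_singleton]

lemma card_rcl_one {m : ℕ} (hm : 2 ≤ m) :
    (Finset.univ.filter (fun x : Fin m => rcl m x = 1)).card = m - 2 := by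
  have h1 : (Finset.univ.filter (fun x : Fin m => rcl m x = 1)).card =
      ∑ x : Fin m, (if (x : ℕ) ≠ 0 ∧ (x : ℕ) ≠ m - 1 then 1 else 0) := by
    rw [Finset.card_filter]
    refine Finset.sum_congr rfl (fun x _ => ?_)
    simp only [rcl_eq_one_iff]
  rw [h1, Fin.sum_univ_eq_sum_range (fun k => if k ≠ 0 ∧ k ≠ m - 1 then 1 else 0),
    ← Finset.card_filter]
  have : (Finset.range m).filter (fun k => k ≠ 0 ∧ k ≠ m - 1) = Finset.Ioo 0 (m - 1) := by
    ext k
    simp only [Finset.mem_filter, Finset.mem_range, Finset.mem_Ioo]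
    omega
  rw [this, Nat.card_Ioo]
  omega

lemma card_rcl {m : ℕ} (hm : 2 ≤ m) (i : Fin 3) :
    (Finset.univ.filter (fun x : Fin m => rcl m x = i)).card =
      if i = 1 then m - 2 else 1 := by
  rcases fin3_cases i with rfl | rfl | rfl
  · simpa using card_rcl_zero hm
  · simpa using card_rcl_one hm
  · simpa using card_rcl_two hm

lemma cnt_empty {m n : ℕ} (hm : 2 ≤ m) (hn : 2 ≤ n) :
    cnt m n (∅ : Finset (Fin m × Fin n)) =
      ![![1, n - 2, 1], ![m - 2, (m - 2) * (n - 2), m - 2], ![1, n - 2, 1]] := by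
  funext i j
  have step : cnt m n (∅ : Finset (Fin m × Fin n)) i j =
      (if i = 1 then m - 2 else 1) * (if j = 1 then n - 2 else 1) := by
    unfold cnt
    rw [← card_rcl hm i, ← card_rcl hn j, ← Finset.card_product]
    have : (Finset.univ : Finset (Fin m × Fin n)).filter
        (fun v => v ∉ (∅ : Finset (Fin m × Fin n)) ∧ rcl m v.1 = i ∧ rcl n v.2 = j) =
        ((Finset.univ : Finset (Fin m)).filter (fun x => rcl m x = i)) ×ˢ
        ((Finset.univ : Finset (Fin n)).filter (fun y => rcl n y = j)) := by
      ext v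
      simp [Finset.mem_product]
    rw [this]
  rw [step]
  rcases fin3_cases i with rfl | rfl | rfl <;> rcases fin3_cases j with rfl | rfl | rfl <;>
    simp [Matrix.cons_val_zero, Matrix.cons_val_one]

end GridNimAux

/-- The grid games have the same nim-values as the corresponding matrix games with
starting matrix `M = [[1, n-2, 1], [m-2, (m-2)(n-2), m-2], [1, n-2, 1]]`. -/
theorem grid_nim_eq_matrix_nim (m n : ℕ) (hm : 2 ≤ m) (hmn : m ≤ n) (hn : 3 ≤ n) :
    (DNTgame (gridGraph m n)).nimValue = nimDNTmat ![![1, n - 2, 1], ![m - 2, (m - 2) * (n - 2), m - 2], ![1, n - 2, 1]] ∧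
    (TERgame (gridGraph m n)).nimValue = nimTERmat ![![1, n - 2, 1], ![m - 2, (m - 2) * (n - 2), m - 2], ![1, n - 2, 1]] := by
  have hm2 : 2 ≤ m := hm
  have hn2 : 2 ≤ n := by omega
  have hstart : GridNimAux.cnt m n (∅ : Finset (Fin m × Fin n)) =
      ![![1, n - 2, 1], ![m - 2, (m - 2) * (n - 2), m - 2], ![1, n - 2, 1]] :=
    GridNimAux.cnt_empty hm2 hn2
  constructor
  · have h1 : (DNTgame (gridGraph m n)).nimValue
        = (DNTgame (gridGraph m n)).nim (∅ : Finset (Fin m × Fin n)) := rfl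
    have h2 : nimDNTmat ![![1, n - 2, 1], ![m - 2, (m - 2) * (n - 2), m - 2], ![1, n - 2, 1]]
        = (DNTmat ![![1, n - 2, 1], ![m - 2, (m - 2) * (n - 2), m - 2], ![1, n - 2, 1]]).nim
          (GridNimAux.cnt m n (∅ : Finset (Fin m × Fin n))) := by
      rw [hstart]; rfl
    rw [h1, h2]
    exact (GridNimAux.nim_transfer (DNTgame (gridGraph m n))
      (DNTmat ![![1, n - 2, 1], ![m - 2, (m - 2) * (n - 2), m - 2], ![1, n - 2, 1]])
      (GridNimAux.cnt m n) (fun P => GridNimAux.DNT_opt_eq hm2 hn2 P)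
      (∅ : Finset (Fin m × Fin n))).symm
  · have h1 : (TERgame (gridGraph m n)).nimValue
        = (TERgame (gridGraph m n)).nim (∅ : Finset (Fin m × Fin n)) := rfl
    have h2 : nimTERmat ![![1, n - 2, 1], ![m - 2, (m - 2) * (n - 2), m - 2], ![1, n - 2, 1]]
        = (TERmat ![![1, n - 2, 1], ![m - 2, (m - 2) * (n - 2), m - 2], ![1, n - 2, 1]]).nim
          (GridNimAux.cnt m n (∅ : Finset (Fin m × Fin n))) := by
      rw [hstart]; rfl
    rw [h1, h2]
    exact (GridNimAux.nim_transfer (TERgame (gridGraph m n))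
      (TERmat ![![1, n - 2, 1], ![m - 2, (m - 2) * (n - 2), m - 2], ![1, n - 2, 1]])
      (GridNimAux.cnt m n) (fun P => GridNimAux.TER_opt_eq hm2 hn2 P)
      (∅ : Finset (Fin m × Fin n))).symm
end

section
/- For every grid graph P_m□P_n (with 2 ≤ m ≤ n and 3 ≤ n), nim(DNT(P_m□P_n)) = pty(mn), where pty(mn) = mn mod 2. -/
/-! ### Auxiliary material for the grid DNT game -/

namespace GridDNTAux
open SimpleGraph

/-! #### Generic mex / nim-value certificate lemmas -/

lemma nim_eq (G : GameGraph) (p : G.Pos) :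
    G.nim p = mex {n : ℕ | ∃ q, ∃ _ : q ∈ G.opt p, G.nim q = n} := by
  rw [GameGraph.nim, WellFounded.fix_eq]

lemma mex_eq_zero {S : Set ℕ} (h : 0 ∉ S) : mex S = 0 :=
  Nat.sInf_eq_zero.2 (Or.inl h)

lemma mex_ne_zero {S : Set ℕ} (hfin : S.Finite) (h : 0 ∈ S) : mex S ≠ 0 := by
  intro h0
  rcases Nat.sInf_eq_zero.1 h0 with h1 | h1
  · exact h1 h
  · obtain ⟨k, hk⟩ := (hfin.infinite_compl).nonempty
    exact (Set.eq_empty_iff_forall_notMem.1 h1) k hk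

lemma mex_eq_one {S : Set ℕ} (h0 : 0 ∈ S) (h1 : 1 ∉ S) : mex S = 1 := by
  refine le_antisymm (Nat.sInf_le h1) ?_
  rcases Nat.eq_zero_or_pos (mex S) with h | h
  · rcases Nat.sInf_eq_zero.1 h with h2 | h2
    · exact absurd h0 h2
    · exact absurd (Set.eq_empty_iff_forall_notMem.1 h2 1) (by simp [h1])
  · exact h

lemma mex_ne_one {S : Set ℕ} (h1 : 1 ∈ S) : mex S ≠ 1 := by
  intro h
  have hne : {n : ℕ | n ∉ S}.Nonempty := by
    by_contra hc
    rw [Set.not_nonempty_iff_eq_empty] at hc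
    rw [mex, hc] at h
    simp at h
  have := Nat.sInf_mem hne
  rw [mex] at h
  rw [h] at this
  exact this h1

/-- value-0 certificate -/
theorem cert0 (G : GameGraph)
    (hfin : ∀ p : G.Pos, {n : ℕ | ∃ q, ∃ _ : q ∈ G.opt p, G.nim q = n}.Finite)
    (Z : G.Pos → Prop)
    (hZ : ∀ p, Z p → ∀ q ∈ G.opt p, ∃ r ∈ G.opt q, Z r) :
    ∀ p, Z p → G.nim p = 0 := by
  have main : ∀ p, (Z p → G.nim p = 0) ∧ ((∃ r, ∃ _ : r ∈ G.opt p, Z r) → G.nim p ≠ 0) := by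
    intro p
    induction p using G.wf.induction with
    | _ p ih =>
      constructor
      · intro hp
        rw [nim_eq]
        apply mex_eq_zero
        rintro ⟨q, hq, hq0⟩
        obtain ⟨r, hr, hrZ⟩ := hZ p hp q hq
        exact (ih q hq).2 ⟨r, hr, hrZ⟩ hq0
      · rintro ⟨r, hr, hrZ⟩
        rw [nim_eq]
        exact mex_ne_zero (hfin p) ⟨r, hr, (ih r hr).1 hrZ⟩
  exact fun p hp => (main p).1 hp

/-- value-1 certificate -/
theorem cert1 (G : GameGraph)
    (hfin : ∀ p : G.Pos, {n : ℕ | ∃ q, ∃ _ : q ∈ G.opt p, G.nim q = n}.Finite)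
    (Z O : G.Pos → Prop)
    (hZ : ∀ p, Z p → ∀ q ∈ G.opt p, ∃ r ∈ G.opt q, Z r)
    (hO : ∀ p, O p → (∃ q, ∃ _ : q ∈ G.opt p, Z q) ∧
      (∀ q ∈ G.opt p, Z q ∨ ∃ r ∈ G.opt q, O r)) :
    ∀ p, O p → G.nim p = 1 := by
  have hz0 := cert0 G hfin Z hZ
  have main : ∀ p, (O p → G.nim p = 1) ∧ ((∃ r, ∃ _ : r ∈ G.opt p, O r) → G.nim p ≠ 1) := by
    intro p
    induction p using G.wf.induction with
    | _ p ih =>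
      constructor
      · intro hp
        obtain ⟨⟨q0, hq0, hq0Z⟩, hopts⟩ := hO p hp
        rw [nim_eq]
        apply mex_eq_one
        · exact ⟨q0, hq0, hz0 q0 hq0Z⟩
        · rintro ⟨q, hq, hq1⟩
          rcases hopts q hq with hqZ | ⟨r, hr, hrO⟩
          · rw [hz0 q hqZ] at hq1; exact one_ne_zero hq1.symm
          · exact (ih q hq).2 ⟨r, hr, hrO⟩ hq1
      · rintro ⟨r, hr, hrO⟩
        rw [nim_eq]
        exact mex_ne_one ⟨r, hr, (ih r hr).1 hrO⟩
  exact fun p hp => (main p).1 hp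

/-! #### Grid distance -/

variable {m n : ℕ}

/-- L1 distance on the grid. -/
def L1 (u v : Fin m × Fin n) : ℕ := Nat.dist u.1.val v.1.val + Nat.dist u.2.val v.2.val

lemma natdist (a b : ℕ) : Nat.dist a b = a - b + (b - a) := rfl

lemma adj_iff {u v : Fin m × Fin n} : (gridGraph m n).Adj u v ↔
    (Nat.dist u.1.val v.1.val = 1 ∧ u.2 = v.2) ∨ (u.1 = v.1 ∧ Nat.dist u.2.val v.2.val = 1) := by
  constructor
  · intro h
    rcases (SimpleGraph.boxProd_adj.1 h) with ⟨h1, h2⟩ | ⟨h1, h2⟩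
    · left; refine ⟨?_, h2⟩
      rcases pathGraph_adj.1 h1 with h | h <;> simp [natdist] <;> omega
    · right; refine ⟨h2, ?_⟩
      rcases pathGraph_adj.1 h1 with h | h <;> simp [natdist] <;> omega
  · intro h
    apply SimpleGraph.boxProd_adj.2
    rcases h with ⟨h1, h2⟩ | ⟨h1, h2⟩
    · left; refine ⟨pathGraph_adj.2 ?_, h2⟩
      rw [natdist] at h1; omega
    · right; refine ⟨pathGraph_adj.2 ?_, h1⟩
      rw [natdist] at h2; omega

lemma walk_len_ge {u v : Fin m × Fin n} (p : (gridGraph m n).Walk u v) :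
    L1 u v ≤ p.length := by
  induction p with
  | nil => simp [L1, natdist]
  | @cons a b c hadj p ih =>
    rw [SimpleGraph.Walk.length_cons]
    have h2 := adj_iff.1 hadj
    have t1 := Nat.dist.triangle_inequality a.1.val b.1.val c.1.val
    have t2 := Nat.dist.triangle_inequality a.2.val b.2.val c.2.val
    have : L1 a c ≤ L1 a b + L1 b c := by
      simp only [L1]; omega
    have hab : L1 a b = 1 := by
      rcases h2 with ⟨h1, h2⟩ | ⟨h1, h2⟩
      · have he : a.2.val = b.2.val := congrArg Fin.val h2
        simp only [L1, natdist] at h1 ⊢; omega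
      · have he : a.1.val = b.1.val := congrArg Fin.val h1
        simp only [L1, natdist] at h2 ⊢; omega
    omega

lemma exists_walk (u v : Fin m × Fin n) :
    ∃ p : (gridGraph m n).Walk u v, p.length = L1 u v := by
  suffices h : ∀ k (u v : Fin m × Fin n), L1 u v ≤ k →
      ∃ p : (gridGraph m n).Walk u v, p.length = L1 u v from h (L1 u v) u v le_rfl
  intro k
  induction k with
  | zero =>
    intro u v h
    have h1 : u.1.val = v.1.val := by simp [L1, natdist] at h; omega
    have h2 : u.2.val = v.2.val := by simp [L1, natdist] at h; omega
    have : u = v := by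
      ext <;> assumption
    subst this
    exact ⟨SimpleGraph.Walk.nil, by simp [L1, natdist]⟩
  | succ k ih =>
    intro u v h
    by_cases huv : u = v
    · subst huv; exact ⟨SimpleGraph.Walk.nil, by simp [L1, natdist]⟩
    · have hne : u.1.val ≠ v.1.val ∨ u.2.val ≠ v.2.val := by
        by_contra hc
        push_neg at hc
        exact huv (by ext <;> [exact hc.1; exact hc.2])
      obtain ⟨w, hadj, hL⟩ : ∃ w : Fin m × Fin n, (gridGraph m n).Adj u w ∧ L1 w v + 1 = L1 u v := by
        rcases hne with hne | hne
        · rcases Nat.lt_or_ge u.1.val v.1.val with hlt | hge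
          · refine ⟨(⟨u.1.val + 1, by omega⟩, u.2), adj_iff.2 (Or.inl ⟨by simp [natdist], rfl⟩), ?_⟩
            simp [L1, natdist]; omega
          · have hpos : 0 < u.1.val := by omega
            refine ⟨(⟨u.1.val - 1, by omega⟩, u.2), adj_iff.2 (Or.inl ⟨by simp [natdist]; omega, rfl⟩), ?_⟩
            simp [L1, natdist]; omega
        · rcases Nat.lt_or_ge u.2.val v.2.val with hlt | hge
          · refine ⟨(u.1, ⟨u.2.val + 1, by omega⟩), adj_iff.2 (Or.inr ⟨rfl, by simp [natdist]⟩), ?_⟩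
            simp [L1, natdist]; omega
          · have hpos : 0 < u.2.val := by omega
            refine ⟨(u.1, ⟨u.2.val - 1, by omega⟩), adj_iff.2 (Or.inr ⟨rfl, by simp [natdist]; omega⟩), ?_⟩
            simp [L1, natdist]; omega
      obtain ⟨p, hp⟩ := ih w v (by omega)
      exact ⟨SimpleGraph.Walk.cons hadj p, by simp [hp]; omega⟩

lemma grid_dist (u v : Fin m × Fin n) : (gridGraph m n).dist u v = L1 u v := by
  obtain ⟨p, hp⟩ := exists_walk u v
  refine le_antisymm (hp ▸ SimpleGraph.dist_le p) ?_
  by_cases h0 : (gridGraph m n).dist u v = 0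
  · rw [h0]
    rcases SimpleGraph.dist_eq_zero_iff_eq_or_not_reachable.1 h0 with rfl | hnr
    · simp [L1, natdist]
    · exact absurd ⟨p⟩ hnr
  · obtain ⟨q, hq⟩ := SimpleGraph.exists_walk_of_dist_ne_zero h0
    exact hq ▸ walk_len_ge q

/-! #### Hull characterization -/

/-- The set touches all four border lines. -/
def Bdry (m n : ℕ) (S : Set (Fin m × Fin n)) : Prop :=
  (∃ p ∈ S, p.1.val = 0) ∧ (∃ p ∈ S, p.1.val = m - 1) ∧
  (∃ p ∈ S, p.2.val = 0) ∧ (∃ p ∈ S, p.2.val = n - 1)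

set_option maxHeartbeats 1600000 in
lemma hull_univ_iff (hm : 2 ≤ m) (hn : 2 ≤ n) (S : Set (Fin m × Fin n)) :
    geoHull (gridGraph m n) S = Set.univ ↔ Bdry m n S := by
  constructor
  · intro h
    refine ⟨?_, ?_, ?_, ?_⟩
    · by_contra h0
      push_neg at h0
      have hK : geoConvex (gridGraph m n) {p : Fin m × Fin n | p.1.val ≠ 0} := by
        intro u hu v hv w hw
        simp only [Set.mem_setOf_eq] at hu hv ⊢
        intro hw0
        rw [grid_dist, grid_dist, grid_dist] at hw
        simp only [L1, natdist, hw0] at hw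
        have := Nat.dist.triangle_inequality u.2.val w.2.val v.2.val
        simp only [natdist] at this
        omega
      have hsub : geoHull (gridGraph m n) S ⊆ {p : Fin m × Fin n | p.1.val ≠ 0} :=
        Set.sInter_subset_of_mem ⟨hK, fun p hp => h0 p hp⟩
      have : ((⟨0, by omega⟩ : Fin m), (⟨0, by omega⟩ : Fin n)) ∈ geoHull (gridGraph m n) S := by
        rw [h]; trivial
      exact (hsub this) rfl
    · by_contra h0
      push_neg at h0
      have hK : geoConvex (gridGraph m n) {p : Fin m × Fin n | p.1.val ≠ m - 1} := by
        intro u hu v hv w hw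
        simp only [Set.mem_setOf_eq] at hu hv ⊢
        intro hw0
        rw [grid_dist, grid_dist, grid_dist] at hw
        have h1 := u.1.isLt
        have h2 := v.1.isLt
        simp only [L1, natdist, hw0] at hw
        have := Nat.dist.triangle_inequality u.2.val w.2.val v.2.val
        simp only [natdist] at this
        omega
      have hsub : geoHull (gridGraph m n) S ⊆ {p : Fin m × Fin n | p.1.val ≠ m - 1} :=
        Set.sInter_subset_of_mem ⟨hK, fun p hp => h0 p hp⟩
      have : ((⟨m - 1, by omega⟩ : Fin m), (⟨0, by omega⟩ : Fin n)) ∈ geoHull (gridGraph m n) S := by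
        rw [h]; trivial
      exact (hsub this) rfl
    · by_contra h0
      push_neg at h0
      have hK : geoConvex (gridGraph m n) {p : Fin m × Fin n | p.2.val ≠ 0} := by
        intro u hu v hv w hw
        simp only [Set.mem_setOf_eq] at hu hv ⊢
        intro hw0
        rw [grid_dist, grid_dist, grid_dist] at hw
        simp only [L1, natdist, hw0] at hw
        have := Nat.dist.triangle_inequality u.1.val w.1.val v.1.val
        simp only [natdist] at this
        omega
      have hsub : geoHull (gridGraph m n) S ⊆ {p : Fin m × Fin n | p.2.val ≠ 0} :=
        Set.sInter_subset_of_mem ⟨hK, fun p hp => h0 p hp⟩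
      have : ((⟨0, by omega⟩ : Fin m), (⟨0, by omega⟩ : Fin n)) ∈ geoHull (gridGraph m n) S := by
        rw [h]; trivial
      exact (hsub this) rfl
    · by_contra h0
      push_neg at h0
      have hK : geoConvex (gridGraph m n) {p : Fin m × Fin n | p.2.val ≠ n - 1} := by
        intro u hu v hv w hw
        simp only [Set.mem_setOf_eq] at hu hv ⊢
        intro hw0
        rw [grid_dist, grid_dist, grid_dist] at hw
        have h1 := u.2.isLt
        have h2 := v.2.isLt
        simp only [L1, natdist, hw0] at hw
        have := Nat.dist.triangle_inequality u.1.val w.1.val v.1.val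
        simp only [natdist] at this
        omega
      have hsub : geoHull (gridGraph m n) S ⊆ {p : Fin m × Fin n | p.2.val ≠ n - 1} :=
        Set.sInter_subset_of_mem ⟨hK, fun p hp => h0 p hp⟩
      have : ((⟨0, by omega⟩ : Fin m), (⟨n - 1, by omega⟩ : Fin n)) ∈ geoHull (gridGraph m n) S := by
        rw [h]; trivial
      exact (hsub this) rfl
  · rintro ⟨⟨t, ht, ht0⟩, ⟨b, hb, hb0⟩, ⟨l, hl, hl0⟩, ⟨r, hr, hr0⟩⟩
    apply Set.eq_univ_of_forall
    intro w
    intro K hK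
    obtain ⟨hKc, hKs⟩ := hK
    have hw1 : (w.1, t.2) ∈ K := by
      refine hKc t (hKs ht) b (hKs hb) (w.1, t.2) ?_
      rw [grid_dist, grid_dist, grid_dist]
      have h1 := w.1.isLt
      have h2 := b.1.isLt
      simp only [L1, natdist, ht0, hb0]
      omega
    have hw2 : (l.1, w.2) ∈ K := by
      refine hKc l (hKs hl) r (hKs hr) (l.1, w.2) ?_
      rw [grid_dist, grid_dist, grid_dist]
      have h1 := w.2.isLt
      have h2 := r.2.isLt
      simp only [L1, natdist, hl0, hr0]
      omega
    refine hKc _ hw1 _ hw2 w ?_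
    rw [grid_dist, grid_dist, grid_dist]
    simp only [L1, natdist]
    omega

/-! #### Symmetry -/

/-- 180 degree rotation of the grid. -/
def sig (p : Fin m × Fin n) : Fin m × Fin n := (p.1.rev, p.2.rev)

lemma sig_invol (p : Fin m × Fin n) : sig (sig p) = p := by
  simp [sig]

lemma sig_val1 (p : Fin m × Fin n) : (sig p).1.val = m - (p.1.val + 1) := Fin.val_rev p.1

lemma sig_val2 (p : Fin m × Fin n) : (sig p).2.val = n - (p.2.val + 1) := Fin.val_rev p.2

lemma sig_inj {p q : Fin m × Fin n} (h : sig p = sig q) : p = q := by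
  have := congrArg sig h
  rwa [sig_invol, sig_invol] at this

/-- Pointwise symmetry of a finite position. -/
def Sym (P : Finset (Fin m × Fin n)) : Prop := ∀ x, x ∈ P ↔ sig x ∈ P

lemma compl_insert' {α : Type} (a : α) (s : Set α) : (insert a s)ᶜ = sᶜ \ {a} := by
  ext x; simp [and_comm]

lemma sym_compl {P : Finset (Fin m × Fin n)} (hP : Sym P) :
    ∀ x, x ∈ (↑P : Set (Fin m × Fin n))ᶜ ↔ sig x ∈ (↑P : Set (Fin m × Fin n))ᶜ := by
  intro x
  simp only [Set.mem_compl_iff, Finset.mem_coe]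
  rw [hP x]

lemma sym_insert_pair {P : Finset (Fin m × Fin n)} (hP : Sym P) (v : Fin m × Fin n) :
    Sym (insert (sig v) (insert v P)) := by
  intro x
  simp only [Finset.mem_insert]
  constructor
  · rintro (rfl | rfl | hx)
    · rw [sig_invol]; tauto
    · tauto
    · exact Or.inr (Or.inr ((hP x).1 hx))
  · rintro (h | h | hx)
    · right; left; exact sig_inj h
    · left; exact (by rw [← h, sig_invol])
    · right; right
      have := (hP (sig x)).1 hx
      rwa [sig_invol] at this
  
/-- Preservation of the border condition by the symmetric response. -/
lemma bdry_step (hm : 2 ≤ m) (hn : 2 ≤ n) (C : Set (Fin m × Fin n))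
    (hC : ∀ x, x ∈ C ↔ sig x ∈ C) (v : Fin m × Fin n)
    (h : Bdry m n (C \ {v})) : Bdry m n ((C \ {v}) \ {sig v}) := by
  obtain ⟨⟨p1, hp1, hp1v⟩, ⟨p2, hp2, hp2v⟩, ⟨p3, hp3, hp3v⟩, ⟨p4, hp4, hp4v⟩⟩ := h
  simp only [Set.mem_diff, Set.mem_singleton_iff] at hp1 hp2 hp3 hp4
  refine ⟨?_, ?_, ?_, ?_⟩
  · by_cases hps : p1 = sig v
    · refine ⟨sig p2, ?_, by rw [sig_val1]; omega⟩
      simp only [Set.mem_diff, Set.mem_singleton_iff]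
      refine ⟨⟨(hC p2).1 hp2.1, ?_⟩, fun hq => hp2.2 (sig_inj hq)⟩
      intro hq
      have h2 : p2 = sig v := by rw [← hq, sig_invol]
      have : p1 = p2 := by rw [hps, h2]
      rw [this, hp2v] at hp1v
      omega
    · exact ⟨p1, by simp only [Set.mem_diff, Set.mem_singleton_iff]; exact ⟨hp1, hps⟩, hp1v⟩
  · by_cases hps : p2 = sig v
    · refine ⟨sig p1, ?_, by rw [sig_val1]; omega⟩
      simp only [Set.mem_diff, Set.mem_singleton_iff]
      refine ⟨⟨(hC p1).1 hp1.1, ?_⟩, fun hq => hp1.2 (sig_inj hq)⟩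
      intro hq
      have h2 : p1 = sig v := by rw [← hq, sig_invol]
      have : p1 = p2 := by rw [h2, hps]
      rw [this, hp2v] at hp1v
      omega
    · exact ⟨p2, by simp only [Set.mem_diff, Set.mem_singleton_iff]; exact ⟨hp2, hps⟩, hp2v⟩
  · by_cases hps : p3 = sig v
    · refine ⟨sig p4, ?_, by rw [sig_val2]; omega⟩
      simp only [Set.mem_diff, Set.mem_singleton_iff]
      refine ⟨⟨(hC p4).1 hp4.1, ?_⟩, fun hq => hp4.2 (sig_inj hq)⟩
      intro hq
      have h2 : p4 = sig v := by rw [← hq, sig_invol]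
      have : p3 = p4 := by rw [hps, h2]
      rw [this, hp4v] at hp3v
      omega
    · exact ⟨p3, by simp only [Set.mem_diff, Set.mem_singleton_iff]; exact ⟨hp3, hps⟩, hp3v⟩
  · by_cases hps : p4 = sig v
    · refine ⟨sig p3, ?_, by rw [sig_val2]; omega⟩
      simp only [Set.mem_diff, Set.mem_singleton_iff]
      refine ⟨⟨(hC p3).1 hp3.1, ?_⟩, fun hq => hp3.2 (sig_inj hq)⟩
      intro hq
      have h2 : p3 = sig v := by rw [← hq, sig_invol]
      have : p3 = p4 := by rw [h2, hps]
      rw [this, hp4v] at hp3v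
      omega
    · exact ⟨p4, by simp only [Set.mem_diff, Set.mem_singleton_iff]; exact ⟨hp4, hps⟩, hp4v⟩

end GridDNTAux

/-- For every grid graph `P_m □ P_n`, `nim(DNT(P_m □ P_n)) = pty (m n)`. -/
theorem grid_DNT_nim (m n : ℕ) (hm : 2 ≤ m) (hmn : m ≤ n) (hn : 3 ≤ n) :
    (DNTgame (gridGraph m n)).nimValue = (m * n) % 2 := by
  classical
  have hn2 : 2 ≤ n := by omega
  set G := gridGraph m n with hG
  haveI : Finite ((DNTgame G).Pos) := inferInstanceAs (Finite (Finset (Fin m × Fin n)))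
  have hfin : ∀ p : (DNTgame G).Pos,
      {k : ℕ | ∃ q, ∃ _ : q ∈ (DNTgame G).opt p, (DNTgame G).nim q = k}.Finite := by
    intro p
    apply Set.Finite.subset (Set.finite_range (DNTgame G).nim)
    rintro k ⟨q, hq, rfl⟩
    exact ⟨q, rfl⟩
  have hcompl : ∀ (v : Fin m × Fin n) (P : Finset (Fin m × Fin n)),
      ((↑(insert v P) : Set (Fin m × Fin n)))ᶜ = (↑P : Set (Fin m × Fin n))ᶜ \ {v} := by
    intro v P
    rw [Finset.coe_insert, GridDNTAux.compl_insert']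
  -- the symmetric response move
  have hresp : ∀ (P : Finset (Fin m × Fin n)) (v : Fin m × Fin n), GridDNTAux.Sym P → v ∉ P →
      GridDNTAux.sig v ≠ v →
      geoHull G ((↑(insert v P) : Set (Fin m × Fin n))ᶜ) = Set.univ →
      (insert (GridDNTAux.sig v) (insert v P)) ∈ DNTgraphOpt G (insert v P) ∧
        GridDNTAux.Sym (insert (GridDNTAux.sig v) (insert v P)) ∧
        geoHull G ((↑(insert (GridDNTAux.sig v) (insert v P)) : Set (Fin m × Fin n))ᶜ)
          = Set.univ := by
    intro P v hP hv hsv hh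
    have hbd : GridDNTAux.Bdry m n ((↑P : Set (Fin m × Fin n))ᶜ \ {v}) := by
      rw [← hcompl]
      exact (GridDNTAux.hull_univ_iff hm hn2 _).1 hh
    have hbd2 := GridDNTAux.bdry_step hm hn2 _ (GridDNTAux.sym_compl hP) v hbd
    have hull2 : geoHull G ((↑(insert (GridDNTAux.sig v) (insert v P)) :
        Set (Fin m × Fin n))ᶜ) = Set.univ := by
      rw [hcompl, hcompl]
      exact (GridDNTAux.hull_univ_iff hm hn2 _).2 hbd2
    refine ⟨?_, GridDNTAux.sym_insert_pair hP v, hull2⟩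
    refine ⟨GridDNTAux.sig v, ?_, rfl, hull2⟩
    simp only [Finset.mem_insert]
    push_neg
    refine ⟨hsv, ?_⟩
    intro hmem
    have := (hP (GridDNTAux.sig v)).1 hmem
    rw [GridDNTAux.sig_invol] at this
    exact hv this
  rcases Nat.even_or_odd (m * n) with hev | hod
  · -- even case : symmetric positions are a value-0 certificate
    have hnofix : ∀ v : Fin m × Fin n, GridDNTAux.sig v ≠ v := by
      intro v hfix
      have h1 : (GridDNTAux.sig v).1.val = v.1.val := by rw [hfix]
      have h2 : (GridDNTAux.sig v).2.val = v.2.val := by rw [hfix]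
      rw [GridDNTAux.sig_val1] at h1
      rw [GridDNTAux.sig_val2] at h2
      have hv1 := v.1.isLt
      have hv2 := v.2.isLt
      have hmo : Odd m := by rw [Nat.odd_iff]; omega
      have hno : Odd n := by rw [Nat.odd_iff]; omega
      exact (Nat.not_odd_iff_even.2 hev) (Nat.odd_mul.2 ⟨hmo, hno⟩)
    have h0 : (DNTgame G).nim (∅ : Finset (Fin m × Fin n)) = 0 := by
      refine GridDNTAux.cert0 (DNTgame G) hfin GridDNTAux.Sym ?_
        (∅ : Finset (Fin m × Fin n)) (by intro x; simp [GridDNTAux.Sym])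
      intro P hP q hq
      obtain ⟨v, hv, rfl, hh⟩ := hq
      obtain ⟨hmem, hsym, -⟩ := hresp P v hP hv (hnofix v) hh
      exact ⟨_, hmem, hsym⟩
    have : (m * n) % 2 = 0 := Nat.even_iff.1 hev
    rw [this]
    exact h0
  · -- odd case
    obtain ⟨hmo, hno⟩ := Nat.odd_mul.1 hod
    have hm2 : m % 2 = 1 := Nat.odd_iff.1 hmo
    have hnn2 : n % 2 = 1 := Nat.odd_iff.1 hno
    have hm3 : 3 ≤ m := by omega
    set z : Fin m × Fin n := (⟨(m - 1) / 2, by omega⟩, ⟨(n - 1) / 2, by omega⟩) with hz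
    have hsigz : GridDNTAux.sig z = z := by
      have e1 : (GridDNTAux.sig z).1.val = z.1.val := by
        rw [GridDNTAux.sig_val1]; show m - ((m - 1) / 2 + 1) = (m - 1) / 2; omega
      have e2 : (GridDNTAux.sig z).2.val = z.2.val := by
        rw [GridDNTAux.sig_val2]; show n - ((n - 1) / 2 + 1) = (n - 1) / 2; omega
      exact Prod.ext (Fin.ext e1) (Fin.ext e2)
    have hfix : ∀ v : Fin m × Fin n, GridDNTAux.sig v = v → v = z := by
      intro v hfixv
      have h1 : (GridDNTAux.sig v).1.val = v.1.val := by rw [hfixv]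
      have h2 : (GridDNTAux.sig v).2.val = v.2.val := by rw [hfixv]
      rw [GridDNTAux.sig_val1] at h1
      rw [GridDNTAux.sig_val2] at h2
      have hv1 := v.1.isLt
      have hv2 := v.2.isLt
      refine Prod.ext (Fin.ext ?_) (Fin.ext ?_)
      · show v.1.val = (m - 1) / 2; omega
      · show v.2.val = (n - 1) / 2; omega
    have hzb1 : z.1.val ≠ 0 := by show (m - 1) / 2 ≠ 0; omega
    have hzb2 : z.1.val ≠ m - 1 := by show (m - 1) / 2 ≠ m - 1; omega
    have hzb3 : z.2.val ≠ 0 := by show (n - 1) / 2 ≠ 0; omega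
    have hzb4 : z.2.val ≠ n - 1 := by show (n - 1) / 2 ≠ n - 1; omega
    have hsymins : ∀ P : Finset (Fin m × Fin n), GridDNTAux.Sym P →
        GridDNTAux.Sym (insert z P) := by
      intro P hS x
      simp only [Finset.mem_insert]
      have hxz : x = z ↔ GridDNTAux.sig x = z :=
        ⟨fun h => by rw [h, hsigz], fun h => by
          have := congrArg GridDNTAux.sig h
          rwa [GridDNTAux.sig_invol, hsigz] at this⟩
      rw [← hxz, ← hS x]
    -- the value-0 and value-1 certificates
    set Z' : Finset (Fin m × Fin n) → Prop := fun P => GridDNTAux.Sym P ∧ z ∈ P with hZ'def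
    set O' : Finset (Fin m × Fin n) → Prop := fun P => GridDNTAux.Sym P ∧ z ∉ P ∧
      GridDNTAux.Bdry m n ((↑P : Set (Fin m × Fin n))ᶜ) with hO'def
    have hZ' : ∀ P, Z' P → ∀ q ∈ DNTgraphOpt G P, ∃ r ∈ DNTgraphOpt G q, Z' r := by
      rintro P ⟨hS, hzP⟩ q hq
      obtain ⟨v, hv, rfl, hh⟩ := hq
      have hvz : v ≠ z := fun h => hv (h ▸ hzP)
      have hsv : GridDNTAux.sig v ≠ v := fun h => hvz (hfix v h)
      obtain ⟨hmem, hsym, -⟩ := hresp P v hS hv hsv hh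
      refine ⟨_, hmem, hsym, ?_⟩
      simp only [Finset.mem_insert]
      exact Or.inr (Or.inr hzP)
    have hO' : ∀ P, O' P → (∃ q, ∃ _ : q ∈ DNTgraphOpt G P, Z' q) ∧
        (∀ q ∈ DNTgraphOpt G P, Z' q ∨ ∃ r ∈ DNTgraphOpt G q, O' r) := by
      rintro P ⟨hS, hzP, hbd⟩
      have hinsz : (insert z P) ∈ DNTgraphOpt G P ∧ Z' (insert z P) := by
        constructor
        · refine ⟨z, hzP, rfl, ?_⟩
          rw [hcompl]
          apply (GridDNTAux.hull_univ_iff hm hn2 _).2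
          obtain ⟨⟨p1, hp1, hp1v⟩, ⟨p2, hp2, hp2v⟩, ⟨p3, hp3, hp3v⟩, ⟨p4, hp4, hp4v⟩⟩ := hbd
          refine ⟨⟨p1, ⟨hp1, ?_⟩, hp1v⟩, ⟨p2, ⟨hp2, ?_⟩, hp2v⟩,
            ⟨p3, ⟨hp3, ?_⟩, hp3v⟩, ⟨p4, ⟨hp4, ?_⟩, hp4v⟩⟩
          · intro h; rw [Set.mem_singleton_iff] at h; exact hzb1 (h ▸ hp1v)
          · intro h; rw [Set.mem_singleton_iff] at h; exact hzb2 (h ▸ hp2v)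
          · intro h; rw [Set.mem_singleton_iff] at h; exact hzb3 (h ▸ hp3v)
          · intro h; rw [Set.mem_singleton_iff] at h; exact hzb4 (h ▸ hp4v)
        · exact ⟨hsymins P hS, Finset.mem_insert_self z P⟩
      refine ⟨⟨insert z P, hinsz.1, hinsz.2⟩, ?_⟩
      intro q hq
      obtain ⟨v, hv, rfl, hh⟩ := hq
      by_cases hvz : v = z
      · subst hvz
        exact Or.inl hinsz.2
      · right
        have hsv : GridDNTAux.sig v ≠ v := fun h => hvz (hfix v h)
        obtain ⟨hmem, hsym, hull2⟩ := hresp P v hS hv hsv hh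
        refine ⟨_, hmem, hsym, ?_, ?_⟩
        · simp only [Finset.mem_insert]
          push_neg
          refine ⟨?_, fun h => hvz h.symm, hzP⟩
          intro h
          apply hvz
          have := congrArg GridDNTAux.sig h
          rw [GridDNTAux.sig_invol, hsigz] at this
          exact this.symm
        · rw [hcompl, hcompl]
          apply GridDNTAux.bdry_step hm hn2 _ (GridDNTAux.sym_compl hS) v
          rw [← hcompl]
          exact (GridDNTAux.hull_univ_iff hm hn2 _).1 hh
    have hO'empty : O' ∅ := by
      refine ⟨by intro x; simp, by simp, ?_⟩
      have hall : ∀ x : Fin m × Fin n, x ∈ ((↑(∅ : Finset (Fin m × Fin n)) :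
          Set (Fin m × Fin n)))ᶜ := by simp
      exact ⟨⟨((⟨0, by omega⟩ : Fin m), (⟨0, by omega⟩ : Fin n)), hall _, rfl⟩,
        ⟨((⟨m - 1, by omega⟩ : Fin m), (⟨0, by omega⟩ : Fin n)), hall _, rfl⟩,
        ⟨((⟨0, by omega⟩ : Fin m), (⟨0, by omega⟩ : Fin n)), hall _, rfl⟩,
        ⟨((⟨0, by omega⟩ : Fin m), (⟨n - 1, by omega⟩ : Fin n)), hall _, rfl⟩⟩
    have h1 : (DNTgame G).nim (∅ : Finset (Fin m × Fin n)) = 1 :=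
      GridDNTAux.cert1 (DNTgame G) hfin Z' O' hZ' hO' (∅ : Finset (Fin m × Fin n)) hO'empty
    have : (m * n) % 2 = 1 := Nat.odd_iff.1 hod
    rw [this]
    exact h1
end

section
/- For all nonnegative integers b and d, if M = [[1,b,1],[d,0,d],[1,b,1]], then nim(TER(M)) = 0. -/
/-! The second player wins `TER` from any centrosymmetric matrix with zero center whose edge sums
are all at least `2`, by answering each move at `(i, j)` with the move at the opposite cell
`(2 - i, 2 - j)`. The answer is legal because the center is never positive, and it restores
central symmetry. Only when the first move leaves some edge sum equal to `1` does symmetry stop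
working, and then the second player wins at once by emptying that edge. -/

theorem mex_eq_zero_iff {S : Set ℕ} (hS : S.Finite) : mex S = 0 ↔ 0 ∉ S := by
  obtain ⟨n, hn⟩ := hS.exists_notMem
  rw [mex, Nat.sInf_eq_zero, Set.eq_empty_iff_forall_notMem]
  simpa using fun h => (hn (h n)).elim

namespace GameGraph

variable (G : GameGraph)

theorem nim_eq_mex (p : G.Pos) : G.nim p = mex (G.nim '' G.opt p) := by
  rw [nim, WellFounded.fix_eq]
  congr
  ext n
  simp

theorem nim_eq_zero_iff {p : G.Pos} (hp : (G.opt p).Finite) :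
    G.nim p = 0 ↔ ∀ q ∈ G.opt p, G.nim q ≠ 0 := by
  rw [nim_eq_mex, mex_eq_zero_iff (hp.image G.nim)]
  simp

theorem nim_eq_zero_of_forall_exists_opt_mem (hfin : ∀ p, (G.opt p).Finite) {S : Set G.Pos}
    (hS : ∀ p ∈ S, ∀ q ∈ G.opt p, ∃ r ∈ G.opt q, r ∈ S) {p : G.Pos} (hp : p ∈ S) :
    G.nim p = 0 := by
  induction p using G.wf.transGen.induction with
  | h p ih =>
    refine (G.nim_eq_zero_iff (hfin p)).2 fun q hq hq0 => ?_
    obtain ⟨r, hr, hrS⟩ := hS p hp q hq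
    exact (G.nim_eq_zero_iff (hfin q)).1 hq0 r hr (ih r (.head hr (.single hq)) hrS)

end GameGraph

theorem finite_TERmatOpt (M : Mat3) : (TERmatOpt M).Finite :=
  (Set.finite_range fun p : Fin 3 × Fin 3 => decEntry M p.1 p.2).subset
    fun _ ⟨_, i, j, _, hN⟩ => ⟨(i, j), hN.symm⟩

def EdgeSumsGE (k : ℕ) (M : Mat3) : Prop :=
  k ≤ M 0 0 + M 0 1 + M 0 2 ∧ k ≤ M 2 0 + M 2 1 + M 2 2 ∧
  k ≤ M 0 0 + M 1 0 + M 2 0 ∧ k ≤ M 0 2 + M 1 2 + M 2 2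

def IsCentrosymmetric (M : Mat3) : Prop := ∀ a b, M a.rev b.rev = M a b

def IsMirrorPosition (M : Mat3) : Prop :=
  IsCentrosymmetric M ∧ M 1 1 = 0 ∧ EdgeSumsGE 2 M

variable {M N : Mat3}

theorem EdgeSumsGE.decEntry {k : ℕ} (h : EdgeSumsGE (k + 1) M) (i j : Fin 3) :
    EdgeSumsGE k (decEntry M i j) := by
  simp only [EdgeSumsGE, _root_.decEntry] at *
  fin_cases i <;> fin_cases j <;> simp <;> omega

theorem exists_not_edgeOK_decEntry (hN : edgeOK N) (h : ¬ EdgeSumsGE 2 N) :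
    ∃ i j, 0 < N i j ∧ ¬ edgeOK (decEntry N i j) := by
  simp only [edgeOK, EdgeSumsGE, not_and_or, not_le] at hN h
  rcases h with h | h | h | h
  · rcases (by omega : 0 < N 0 0 ∨ 0 < N 0 1 ∨ 0 < N 0 2) with h' | h' | h' <;>
      exact ⟨_, _, h', by simp [edgeOK, decEntry]; omega⟩
  · rcases (by omega : 0 < N 2 0 ∨ 0 < N 2 1 ∨ 0 < N 2 2) with h' | h' | h' <;>
      exact ⟨_, _, h', by simp [edgeOK, decEntry]; omega⟩
  · rcases (by omega : 0 < N 0 0 ∨ 0 < N 1 0 ∨ 0 < N 2 0) with h' | h' | h' <;>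
      exact ⟨_, _, h', by simp [edgeOK, decEntry]; omega⟩
  · rcases (by omega : 0 < N 0 2 ∨ 0 < N 1 2 ∨ 0 < N 2 2) with h' | h' | h' <;>
      exact ⟨_, _, h', by simp [edgeOK, decEntry]; omega⟩

theorem IsCentrosymmetric.decEntry_decEntry_rev (hM : IsCentrosymmetric M) (i j : Fin 3) :
    IsCentrosymmetric (decEntry (decEntry M i j) i.rev j.rev) := by
  intro a b
  simp only [decEntry, Fin.rev_eq_iff, Fin.rev_rev, hM a b]
  split_ifs <;> omega

theorem IsMirrorPosition.decEntry_decEntry_rev (hM : IsMirrorPosition M) {i j : Fin 3}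
    (hpos : 0 < M i j) (hN : EdgeSumsGE 2 (decEntry M i j)) :
    0 < decEntry M i j i.rev j.rev ∧
      IsMirrorPosition (decEntry (decEntry M i j) i.rev j.rev) := by
  obtain ⟨hsym, hc, -⟩ := hM
  have h22 : M 2 2 = M 0 0 := hsym 0 0
  have h21 : M 2 1 = M 0 1 := hsym 0 1
  have h20 : M 2 0 = M 0 2 := hsym 0 2
  have h12 : M 1 2 = M 1 0 := hsym 1 0
  refine ⟨?_, hsym.decEntry_decEntry_rev i j, ?_⟩ <;>
    simp only [EdgeSumsGE, decEntry] at hN ⊢ <;>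
    fin_cases i <;> fin_cases j <;> simp at hpos hN ⊢ <;> omega

theorem exists_TERmatOpt_mirror_or_terminal (hM : IsMirrorPosition M ∨ ¬ edgeOK M)
    (hN : N ∈ TERmatOpt M) : ∃ R ∈ TERmatOpt N, IsMirrorPosition R ∨ ¬ edgeOK R := by
  obtain ⟨hMok, i, j, hpos, rfl⟩ := hN
  have hM : IsMirrorPosition M := hM.resolve_right (not_not_intro hMok)
  have hNok : edgeOK (decEntry M i j) := hM.2.2.decEntry i j
  by_cases h2 : EdgeSumsGE 2 (decEntry M i j)
  · obtain ⟨hpos', hR⟩ := hM.decEntry_decEntry_rev hpos h2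
    exact ⟨_, ⟨hNok, _, _, hpos', rfl⟩, .inl hR⟩
  · obtain ⟨i', j', hpos', hR⟩ := exists_not_edgeOK_decEntry hNok h2
    exact ⟨_, ⟨hNok, i', j', hpos', rfl⟩, .inr hR⟩

/-- `nim(TER([[1,b,1],[d,0,d],[1,b,1]])) = 0` for all nonnegative integers `b`, `d`. -/
theorem TER_even_matrix (b d : ℕ) :
    nimTERmat ![![1, b, 1], ![d, 0, d], ![1, b, 1]] = 0 := by
  have hstart : IsMirrorPosition ![![1, b, 1], ![d, 0, d], ![1, b, 1]] := by
    refine ⟨fun i j => ?_, rfl, ?_⟩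
    · fin_cases i <;> fin_cases j <;> rfl
    · simp [EdgeSumsGE]
  exact (TERmat _).nim_eq_zero_of_forall_exists_opt_mem finite_TERmatOpt
    (S := {M | IsMirrorPosition M ∨ ¬ edgeOK M})
    (fun _ hM _ hN => exists_TERmatOpt_mirror_or_terminal hM hN) (.inl hstart)
end

section
/- (Horizontal reflection) Let M = [[a,b,c],[e,o,õ],[a,b,c]] be a 3×3 matrix of nonnegative integers where e is even, o and õ are odd, õ ≥ 3, and each of the four edge sums of M is at least 2. Then nim(TER(M)) = 0. -/
set_option linter.unnecessarySeqFocus false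

-- infrastructure tests
noncomputable def tnim : Mat3 → ℕ := (TERmat (fun _ _ => 0)).nim

lemma nimTERmat_eq (M : Mat3) : nimTERmat M = tnim M := rfl

lemma tnim_eq (p : Mat3) :
    tnim p = mex {n : ℕ | ∃ q, ∃ _h : q ∈ TERmatOpt p, tnim q = n} := by
  unfold tnim GameGraph.nim
  refine (WellFounded.fix_eq _ _ _).trans ?_
  rfl

lemma mex_eq_zero_of_not_mem {S : Set ℕ} (h : 0 ∉ S) : mex S = 0 :=
  Nat.sInf_eq_zero.2 (Or.inl h)

lemma mex_not_mem {S : Set ℕ} (hS : S.Finite) : mex S ∉ S := by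
  have h1 : {n : ℕ | n ∉ S}.Nonempty := by
    have := hS.infinite_compl
    exact this.nonempty
  exact Nat.sInf_mem h1

lemma tnim_terminal {p : Mat3} (h : ¬ edgeOK p) : tnim p = 0 := by
  rw [tnim_eq]
  apply mex_eq_zero_of_not_mem
  rintro ⟨q, ⟨hE, _⟩, _⟩
  exact h hE

lemma optset_finite (q : Mat3) :
    {n : ℕ | ∃ p, ∃ _h : p ∈ TERmatOpt q, tnim p = n}.Finite := by
  apply Set.Finite.subset (Set.finite_range
    (fun ij : Fin 3 × Fin 3 => tnim (decEntry q ij.1 ij.2)))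
  rintro n ⟨p, ⟨hE, i, j, hpos, rfl⟩, rfl⟩
  exact ⟨(i, j), rfl⟩

lemma tnim_ne_zero {q r : Mat3} (h : r ∈ TERmatOpt q) (hr : tnim r = 0) : tnim q ≠ 0 := by
  rw [tnim_eq]
  intro h0
  have hmem : (0 : ℕ) ∈ {n : ℕ | ∃ p, ∃ _h : p ∈ TERmatOpt q, tnim p = n} := ⟨r, h, hr⟩
  have := mex_not_mem (optset_finite q)
  rw [h0] at this
  exact this hmem

-- matrix computations
example (a b c d e f g h i : ℕ) :
    mtot ![![a,b,c],![d,e,f],![g,h,i]] = a+b+c+d+e+f+g+h+i := by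
  simp [mtot, Fintype.sum_prod_type, Fin.sum_univ_three]
  ring

example (a b c d e f g h i : ℕ) :
    edgeOK ![![a,b,c],![d,e,f],![g,h,i]] ↔ (0<a+b+c ∧ 0<g+h+i ∧ 0<a+d+g ∧ 0<c+f+i) := by
  simp [edgeOK]

example (a b c d e f g h i : ℕ) :
    decEntry ![![a,b,c],![d,e,f],![g,h,i]] 1 2 = ![![a,b,c],![d,e,f-1],![g,h,i]] := by
  funext x y
  fin_cases x <;> fin_cases y <;> simp [decEntry]

lemma mtot_mk (a b c d e f g h i : ℕ) :
    mtot ![![a,b,c],![d,e,f],![g,h,i]] = a+b+c+d+e+f+g+h+i := by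
  simp [mtot, Fintype.sum_prod_type, Fin.sum_univ_three]
  ring

lemma edgeOK_mk (a b c d e f g h i : ℕ) :
    edgeOK ![![a,b,c],![d,e,f],![g,h,i]] ↔
      (0<a+b+c ∧ 0<g+h+i ∧ 0<a+d+g ∧ 0<c+f+i) := by
  simp [edgeOK]

def Cond (a b c e o ot : ℕ) : Prop :=
  2 ≤ a+b+c ∧ 2 ≤ a+e+a ∧ 2 ≤ c+ot+c ∧ e % 2 = 0 ∧
    ((o % 2 = 1 ∧ ot % 2 = 1 ∧ 3 ≤ ot) ∨ (o % 2 = 0 ∧ ot % 2 = 0))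

def inS (M : Mat3) : Prop :=
  ∃ a b c e o ot, Cond a b c e o ot ∧ M = ![![a,b,c],![e,o,ot],![a,b,c]]

lemma respond {n : ℕ} (ih : ∀ M, mtot M ≤ n → inS M → tnim M = 0)
    {q : Mat3} (hqn : mtot q ≤ n + 1) (hqE : edgeOK q) (i j : Fin 3) (hpos : 0 < q i j)
    (hgood : ¬ edgeOK (decEntry q i j) ∨ inS (decEntry q i j)) : tnim q ≠ 0 := by
  have hmem : decEntry q i j ∈ TERmatOpt q := ⟨hqE, i, j, hpos, rfl⟩
  have hr0 : tnim (decEntry q i j) = 0 := by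
    rcases hgood with h | h
    · exact tnim_terminal h
    · apply ih _ _ h
      have := mtot_lt (show decEntry q i j ∈ matMoves q from ⟨i, j, hpos, rfl⟩)
      omega
  exact tnim_ne_zero hmem hr0

set_option maxHeartbeats 4000000 in
lemma main_lemma : ∀ n M, mtot M ≤ n → inS M → tnim M = 0 := by
  intro n
  induction n with
  | zero =>
      rintro M hn ⟨a,b,c,e,o,ot,⟨h1,h2,h3,he,hpar⟩,rfl⟩
      rw [mtot_mk] at hn; omega
  | succ n ih =>
      rintro M hn ⟨a,b,c,e,o,ot,⟨h1,h2,h3,he,hpar⟩,rfl⟩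
      rw [mtot_mk] at hn
      rw [tnim_eq]
      apply mex_eq_zero_of_not_mem
      rintro ⟨q, ⟨hE, i, j, hpos, rfl⟩, hq0⟩
      fin_cases i <;> fin_cases j
      · -- case (0,0)
        simp at hpos
        rw [show decEntry (![![a,b,c],![e,o,ot],![a,b,c]] : Mat3) ⟨0, by omega⟩ ⟨0, by omega⟩ = (![![a-1,b,c],![e,o,ot],![a,b,c]] : Mat3) from by
          funext x y; fin_cases x <;> fin_cases y <;> simp [decEntry]] at hq0
        by_cases hr : 3 ≤ a + b + c
        · -- mirror
          refine absurd hq0 (respond ih ?_ ?_ 2 0 ?_ ?_)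
          · rw [mtot_mk]; omega
          · rw [edgeOK_mk]; omega
          · simp <;> omega
          · rw [show decEntry (![![a-1,b,c],![e,o,ot],![a,b,c]] : Mat3) 2 0 = (![![a-1,b,c],![e,o,ot],![a-1,b,c]] : Mat3) from by
              funext x y; fin_cases x <;> fin_cases y <;> simp [decEntry]]
            by_cases hsp : 2 ≤ a-1 + e + a-1
            · right; exact ⟨a-1,b,c,e,o,ot, by simp only [Cond]; omega, rfl⟩
            · left; rw [edgeOK_mk]; omega
        · -- kill: row sum of decremented row is 1
          by_cases hk0 : 0 < a-1
          · refine absurd hq0 (respond ih ?_ ?_ 0 0 ?_ ?_)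
            · rw [mtot_mk]; omega
            · rw [edgeOK_mk]; omega
            · simp <;> omega
            · rw [show decEntry (![![a-1,b,c],![e,o,ot],![a,b,c]] : Mat3) 0 0 = (![![(a-1-1),b,c],![e,o,ot],![a,b,c]] : Mat3) from by
                funext x y; fin_cases x <;> fin_cases y <;> simp [decEntry]]
              left; rw [edgeOK_mk]; omega
          · by_cases hk1 : 0 < b
            · refine absurd hq0 (respond ih ?_ ?_ 0 1 ?_ ?_)
              · rw [mtot_mk]; omega
              · rw [edgeOK_mk]; omega
              · simp <;> omega
              · rw [show decEntry (![![a-1,b,c],![e,o,ot],![a,b,c]] : Mat3) 0 1 = (![![a-1,b-1,c],![e,o,ot],![a,b,c]] : Mat3) from by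
                  funext x y; fin_cases x <;> fin_cases y <;> simp [decEntry]]
                left; rw [edgeOK_mk]; omega
            · refine absurd hq0 (respond ih ?_ ?_ 0 2 ?_ ?_)
              · rw [mtot_mk]; omega
              · rw [edgeOK_mk]; omega
              · simp <;> omega
              · rw [show decEntry (![![a-1,b,c],![e,o,ot],![a,b,c]] : Mat3) 0 2 = (![![a-1,b,c-1],![e,o,ot],![a,b,c]] : Mat3) from by
                  funext x y; fin_cases x <;> fin_cases y <;> simp [decEntry]]
                left; rw [edgeOK_mk]; omega
      · -- case (0,1)
        simp at hpos
        rw [show decEntry (![![a,b,c],![e,o,ot],![a,b,c]] : Mat3) ⟨0, by omega⟩ ⟨1, by omega⟩ = (![![a,b-1,c],![e,o,ot],![a,b,c]] : Mat3) from by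
          funext x y; fin_cases x <;> fin_cases y <;> simp [decEntry]] at hq0
        by_cases hr : 3 ≤ a + b + c
        · -- mirror
          refine absurd hq0 (respond ih ?_ ?_ 2 1 ?_ ?_)
          · rw [mtot_mk]; omega
          · rw [edgeOK_mk]; omega
          · simp <;> omega
          · rw [show decEntry (![![a,b-1,c],![e,o,ot],![a,b,c]] : Mat3) 2 1 = (![![a,b-1,c],![e,o,ot],![a,b-1,c]] : Mat3) from by
              funext x y; fin_cases x <;> fin_cases y <;> simp [decEntry]]
            right; exact ⟨a,b-1,c,e,o,ot, by simp only [Cond]; omega, rfl⟩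
        · -- kill: row sum of decremented row is 1
          by_cases hk0 : 0 < a
          · refine absurd hq0 (respond ih ?_ ?_ 0 0 ?_ ?_)
            · rw [mtot_mk]; omega
            · rw [edgeOK_mk]; omega
            · simp <;> omega
            · rw [show decEntry (![![a,b-1,c],![e,o,ot],![a,b,c]] : Mat3) 0 0 = (![![a-1,b-1,c],![e,o,ot],![a,b,c]] : Mat3) from by
                funext x y; fin_cases x <;> fin_cases y <;> simp [decEntry]]
              left; rw [edgeOK_mk]; omega
          · by_cases hk1 : 0 < b-1
            · refine absurd hq0 (respond ih ?_ ?_ 0 1 ?_ ?_)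
              · rw [mtot_mk]; omega
              · rw [edgeOK_mk]; omega
              · simp <;> omega
              · rw [show decEntry (![![a,b-1,c],![e,o,ot],![a,b,c]] : Mat3) 0 1 = (![![a,(b-1-1),c],![e,o,ot],![a,b,c]] : Mat3) from by
                  funext x y; fin_cases x <;> fin_cases y <;> simp [decEntry]]
                left; rw [edgeOK_mk]; omega
            · refine absurd hq0 (respond ih ?_ ?_ 0 2 ?_ ?_)
              · rw [mtot_mk]; omega
              · rw [edgeOK_mk]; omega
              · simp <;> omega
              · rw [show decEntry (![![a,b-1,c],![e,o,ot],![a,b,c]] : Mat3) 0 2 = (![![a,b-1,c-1],![e,o,ot],![a,b,c]] : Mat3) from by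
                  funext x y; fin_cases x <;> fin_cases y <;> simp [decEntry]]
                left; rw [edgeOK_mk]; omega
      · -- case (0,2)
        simp at hpos
        rw [show decEntry (![![a,b,c],![e,o,ot],![a,b,c]] : Mat3) ⟨0, by omega⟩ ⟨2, by omega⟩ = (![![a,b,c-1],![e,o,ot],![a,b,c]] : Mat3) from by
          funext x y; fin_cases x <;> fin_cases y <;> simp [decEntry]] at hq0
        by_cases hr : 3 ≤ a + b + c
        · -- mirror
          refine absurd hq0 (respond ih ?_ ?_ 2 2 ?_ ?_)
          · rw [mtot_mk]; omega
          · rw [edgeOK_mk]; omega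
          · simp <;> omega
          · rw [show decEntry (![![a,b,c-1],![e,o,ot],![a,b,c]] : Mat3) 2 2 = (![![a,b,c-1],![e,o,ot],![a,b,c-1]] : Mat3) from by
              funext x y; fin_cases x <;> fin_cases y <;> simp [decEntry]]
            by_cases hsp : 2 ≤ c-1 + ot + c-1
            · right; exact ⟨a,b,c-1,e,o,ot, by simp only [Cond]; omega, rfl⟩
            · left; rw [edgeOK_mk]; omega
        · -- kill: row sum of decremented row is 1
          by_cases hk0 : 0 < a
          · refine absurd hq0 (respond ih ?_ ?_ 0 0 ?_ ?_)
            · rw [mtot_mk]; omega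
            · rw [edgeOK_mk]; omega
            · simp <;> omega
            · rw [show decEntry (![![a,b,c-1],![e,o,ot],![a,b,c]] : Mat3) 0 0 = (![![a-1,b,c-1],![e,o,ot],![a,b,c]] : Mat3) from by
                funext x y; fin_cases x <;> fin_cases y <;> simp [decEntry]]
              left; rw [edgeOK_mk]; omega
          · by_cases hk1 : 0 < b
            · refine absurd hq0 (respond ih ?_ ?_ 0 1 ?_ ?_)
              · rw [mtot_mk]; omega
              · rw [edgeOK_mk]; omega
              · simp <;> omega
              · rw [show decEntry (![![a,b,c-1],![e,o,ot],![a,b,c]] : Mat3) 0 1 = (![![a,b-1,c-1],![e,o,ot],![a,b,c]] : Mat3) from by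
                  funext x y; fin_cases x <;> fin_cases y <;> simp [decEntry]]
                left; rw [edgeOK_mk]; omega
            · refine absurd hq0 (respond ih ?_ ?_ 0 2 ?_ ?_)
              · rw [mtot_mk]; omega
              · rw [edgeOK_mk]; omega
              · simp <;> omega
              · rw [show decEntry (![![a,b,c-1],![e,o,ot],![a,b,c]] : Mat3) 0 2 = (![![a,b,(c-1-1)],![e,o,ot],![a,b,c]] : Mat3) from by
                  funext x y; fin_cases x <;> fin_cases y <;> simp [decEntry]]
                left; rw [edgeOK_mk]; omega
      · -- case (1,0)
        simp at hpos
        rw [show decEntry (![![a,b,c],![e,o,ot],![a,b,c]] : Mat3) ⟨1, by omega⟩ ⟨0, by omega⟩ = (![![a,b,c],![e-1,o,ot],![a,b,c]] : Mat3) from by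
          funext x y; fin_cases x <;> fin_cases y <;> simp [decEntry]] at hq0
        refine absurd hq0 (respond ih ?_ ?_ 1 0 ?_ ?_)
        · rw [mtot_mk]; omega
        · rw [edgeOK_mk]; omega
        · simp <;> omega
        · rw [show decEntry (![![a,b,c],![e-1,o,ot],![a,b,c]] : Mat3) 1 0 = (![![a,b,c],![(e-1-1),o,ot],![a,b,c]] : Mat3) from by
            funext x y; fin_cases x <;> fin_cases y <;> simp [decEntry]]
          by_cases hsp : 2 ≤ a + (e-1-1) + a
          · right; exact ⟨a,b,c,(e-1-1),o,ot, by simp only [Cond]; omega, rfl⟩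
          · left; rw [edgeOK_mk]; omega
      · -- case (1,1)
        simp at hpos
        rw [show decEntry (![![a,b,c],![e,o,ot],![a,b,c]] : Mat3) ⟨1, by omega⟩ ⟨1, by omega⟩ = (![![a,b,c],![e,o-1,ot],![a,b,c]] : Mat3) from by
          funext x y; fin_cases x <;> fin_cases y <;> simp [decEntry]] at hq0
        rcases hpar with ⟨ho1,hot1,hot3⟩ | ⟨ho0,hot0⟩
        · -- P class: respond at ot
          refine absurd hq0 (respond ih ?_ ?_ 1 2 ?_ ?_)
          · rw [mtot_mk]; omega
          · rw [edgeOK_mk]; omega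
          · simp <;> omega
          · rw [show decEntry (![![a,b,c],![e,o-1,ot],![a,b,c]] : Mat3) 1 2 = (![![a,b,c],![e,o-1,ot-1],![a,b,c]] : Mat3) from by
              funext x y; fin_cases x <;> fin_cases y <;> simp [decEntry]]
            right; exact ⟨a,b,c,e,o-1,ot-1, by simp only [Cond]; omega, rfl⟩
        · -- Q class: respond at o
          refine absurd hq0 (respond ih ?_ ?_ 1 1 ?_ ?_)
          · rw [mtot_mk]; omega
          · rw [edgeOK_mk]; omega
          · simp <;> omega
          · rw [show decEntry (![![a,b,c],![e,o-1,ot],![a,b,c]] : Mat3) 1 1 = (![![a,b,c],![e,(o-1-1),ot],![a,b,c]] : Mat3) from by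
              funext x y; fin_cases x <;> fin_cases y <;> simp [decEntry]]
            right; exact ⟨a,b,c,e,(o-1-1),ot, by simp only [Cond]; omega, rfl⟩
      · -- case (1,2)
        simp at hpos
        rw [show decEntry (![![a,b,c],![e,o,ot],![a,b,c]] : Mat3) ⟨1, by omega⟩ ⟨2, by omega⟩ = (![![a,b,c],![e,o,ot-1],![a,b,c]] : Mat3) from by
          funext x y; fin_cases x <;> fin_cases y <;> simp [decEntry]] at hq0
        rcases hpar with ⟨ho1,hot1,hot3⟩ | ⟨ho0,hot0⟩
        · -- P class: respond at o
          refine absurd hq0 (respond ih ?_ ?_ 1 1 ?_ ?_)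
          · rw [mtot_mk]; omega
          · rw [edgeOK_mk]; omega
          · simp <;> omega
          · rw [show decEntry (![![a,b,c],![e,o,ot-1],![a,b,c]] : Mat3) 1 1 = (![![a,b,c],![e,o-1,ot-1],![a,b,c]] : Mat3) from by
              funext x y; fin_cases x <;> fin_cases y <;> simp [decEntry]]
            right; exact ⟨a,b,c,e,o-1,ot-1, by simp only [Cond]; omega, rfl⟩
        · -- Q class: respond at ot
          refine absurd hq0 (respond ih ?_ ?_ 1 2 ?_ ?_)
          · rw [mtot_mk]; omega
          · rw [edgeOK_mk]; omega
          · simp <;> omega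
          · rw [show decEntry (![![a,b,c],![e,o,ot-1],![a,b,c]] : Mat3) 1 2 = (![![a,b,c],![e,o,(ot-1-1)],![a,b,c]] : Mat3) from by
              funext x y; fin_cases x <;> fin_cases y <;> simp [decEntry]]
            by_cases hsp : 2 ≤ c + (ot-1-1) + c
            · right; exact ⟨a,b,c,e,o,(ot-1-1), by simp only [Cond]; omega, rfl⟩
            · left; rw [edgeOK_mk]; omega
      · -- case (2,0)
        simp at hpos
        rw [show decEntry (![![a,b,c],![e,o,ot],![a,b,c]] : Mat3) ⟨2, by omega⟩ ⟨0, by omega⟩ = (![![a,b,c],![e,o,ot],![a-1,b,c]] : Mat3) from by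
          funext x y; fin_cases x <;> fin_cases y <;> simp [decEntry]] at hq0
        by_cases hr : 3 ≤ a + b + c
        · -- mirror
          refine absurd hq0 (respond ih ?_ ?_ 0 0 ?_ ?_)
          · rw [mtot_mk]; omega
          · rw [edgeOK_mk]; omega
          · simp <;> omega
          · rw [show decEntry (![![a,b,c],![e,o,ot],![a-1,b,c]] : Mat3) 0 0 = (![![a-1,b,c],![e,o,ot],![a-1,b,c]] : Mat3) from by
              funext x y; fin_cases x <;> fin_cases y <;> simp [decEntry]]
            by_cases hsp : 2 ≤ a-1 + e + a-1
            · right; exact ⟨a-1,b,c,e,o,ot, by simp only [Cond]; omega, rfl⟩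
            · left; rw [edgeOK_mk]; omega
        · -- kill: row sum of decremented row is 1
          by_cases hk0 : 0 < a-1
          · refine absurd hq0 (respond ih ?_ ?_ 2 0 ?_ ?_)
            · rw [mtot_mk]; omega
            · rw [edgeOK_mk]; omega
            · simp <;> omega
            · rw [show decEntry (![![a,b,c],![e,o,ot],![a-1,b,c]] : Mat3) 2 0 = (![![a,b,c],![e,o,ot],![(a-1-1),b,c]] : Mat3) from by
                funext x y; fin_cases x <;> fin_cases y <;> simp [decEntry]]
              left; rw [edgeOK_mk]; omega
          · by_cases hk1 : 0 < b
            · refine absurd hq0 (respond ih ?_ ?_ 2 1 ?_ ?_)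
              · rw [mtot_mk]; omega
              · rw [edgeOK_mk]; omega
              · simp <;> omega
              · rw [show decEntry (![![a,b,c],![e,o,ot],![a-1,b,c]] : Mat3) 2 1 = (![![a,b,c],![e,o,ot],![a-1,b-1,c]] : Mat3) from by
                  funext x y; fin_cases x <;> fin_cases y <;> simp [decEntry]]
                left; rw [edgeOK_mk]; omega
            · refine absurd hq0 (respond ih ?_ ?_ 2 2 ?_ ?_)
              · rw [mtot_mk]; omega
              · rw [edgeOK_mk]; omega
              · simp <;> omega
              · rw [show decEntry (![![a,b,c],![e,o,ot],![a-1,b,c]] : Mat3) 2 2 = (![![a,b,c],![e,o,ot],![a-1,b,c-1]] : Mat3) from by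
                  funext x y; fin_cases x <;> fin_cases y <;> simp [decEntry]]
                left; rw [edgeOK_mk]; omega
      · -- case (2,1)
        simp at hpos
        rw [show decEntry (![![a,b,c],![e,o,ot],![a,b,c]] : Mat3) ⟨2, by omega⟩ ⟨1, by omega⟩ = (![![a,b,c],![e,o,ot],![a,b-1,c]] : Mat3) from by
          funext x y; fin_cases x <;> fin_cases y <;> simp [decEntry]] at hq0
        by_cases hr : 3 ≤ a + b + c
        · -- mirror
          refine absurd hq0 (respond ih ?_ ?_ 0 1 ?_ ?_)
          · rw [mtot_mk]; omega
          · rw [edgeOK_mk]; omega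
          · simp <;> omega
          · rw [show decEntry (![![a,b,c],![e,o,ot],![a,b-1,c]] : Mat3) 0 1 = (![![a,b-1,c],![e,o,ot],![a,b-1,c]] : Mat3) from by
              funext x y; fin_cases x <;> fin_cases y <;> simp [decEntry]]
            right; exact ⟨a,b-1,c,e,o,ot, by simp only [Cond]; omega, rfl⟩
        · -- kill: row sum of decremented row is 1
          by_cases hk0 : 0 < a
          · refine absurd hq0 (respond ih ?_ ?_ 2 0 ?_ ?_)
            · rw [mtot_mk]; omega
            · rw [edgeOK_mk]; omega
            · simp <;> omega
            · rw [show decEntry (![![a,b,c],![e,o,ot],![a,b-1,c]] : Mat3) 2 0 = (![![a,b,c],![e,o,ot],![a-1,b-1,c]] : Mat3) from by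
                funext x y; fin_cases x <;> fin_cases y <;> simp [decEntry]]
              left; rw [edgeOK_mk]; omega
          · by_cases hk1 : 0 < b-1
            · refine absurd hq0 (respond ih ?_ ?_ 2 1 ?_ ?_)
              · rw [mtot_mk]; omega
              · rw [edgeOK_mk]; omega
              · simp <;> omega
              · rw [show decEntry (![![a,b,c],![e,o,ot],![a,b-1,c]] : Mat3) 2 1 = (![![a,b,c],![e,o,ot],![a,(b-1-1),c]] : Mat3) from by
                  funext x y; fin_cases x <;> fin_cases y <;> simp [decEntry]]
                left; rw [edgeOK_mk]; omega
            · refine absurd hq0 (respond ih ?_ ?_ 2 2 ?_ ?_)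
              · rw [mtot_mk]; omega
              · rw [edgeOK_mk]; omega
              · simp <;> omega
              · rw [show decEntry (![![a,b,c],![e,o,ot],![a,b-1,c]] : Mat3) 2 2 = (![![a,b,c],![e,o,ot],![a,b-1,c-1]] : Mat3) from by
                  funext x y; fin_cases x <;> fin_cases y <;> simp [decEntry]]
                left; rw [edgeOK_mk]; omega
      · -- case (2,2)
        simp at hpos
        rw [show decEntry (![![a,b,c],![e,o,ot],![a,b,c]] : Mat3) ⟨2, by omega⟩ ⟨2, by omega⟩ = (![![a,b,c],![e,o,ot],![a,b,c-1]] : Mat3) from by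
          funext x y; fin_cases x <;> fin_cases y <;> simp [decEntry]] at hq0
        by_cases hr : 3 ≤ a + b + c
        · -- mirror
          refine absurd hq0 (respond ih ?_ ?_ 0 2 ?_ ?_)
          · rw [mtot_mk]; omega
          · rw [edgeOK_mk]; omega
          · simp <;> omega
          · rw [show decEntry (![![a,b,c],![e,o,ot],![a,b,c-1]] : Mat3) 0 2 = (![![a,b,c-1],![e,o,ot],![a,b,c-1]] : Mat3) from by
              funext x y; fin_cases x <;> fin_cases y <;> simp [decEntry]]
            by_cases hsp : 2 ≤ c-1 + ot + c-1
            · right; exact ⟨a,b,c-1,e,o,ot, by simp only [Cond]; omega, rfl⟩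
            · left; rw [edgeOK_mk]; omega
        · -- kill: row sum of decremented row is 1
          by_cases hk0 : 0 < a
          · refine absurd hq0 (respond ih ?_ ?_ 2 0 ?_ ?_)
            · rw [mtot_mk]; omega
            · rw [edgeOK_mk]; omega
            · simp <;> omega
            · rw [show decEntry (![![a,b,c],![e,o,ot],![a,b,c-1]] : Mat3) 2 0 = (![![a,b,c],![e,o,ot],![a-1,b,c-1]] : Mat3) from by
                funext x y; fin_cases x <;> fin_cases y <;> simp [decEntry]]
              left; rw [edgeOK_mk]; omega
          · by_cases hk1 : 0 < b
            · refine absurd hq0 (respond ih ?_ ?_ 2 1 ?_ ?_)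
              · rw [mtot_mk]; omega
              · rw [edgeOK_mk]; omega
              · simp <;> omega
              · rw [show decEntry (![![a,b,c],![e,o,ot],![a,b,c-1]] : Mat3) 2 1 = (![![a,b,c],![e,o,ot],![a,b-1,c-1]] : Mat3) from by
                  funext x y; fin_cases x <;> fin_cases y <;> simp [decEntry]]
                left; rw [edgeOK_mk]; omega
            · refine absurd hq0 (respond ih ?_ ?_ 2 2 ?_ ?_)
              · rw [mtot_mk]; omega
              · rw [edgeOK_mk]; omega
              · simp <;> omega
              · rw [show decEntry (![![a,b,c],![e,o,ot],![a,b,c-1]] : Mat3) 2 2 = (![![a,b,c],![e,o,ot],![a,b,(c-1-1)]] : Mat3) from by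
                  funext x y; fin_cases x <;> fin_cases y <;> simp [decEntry]]
                left; rw [edgeOK_mk]; omega


/-- (Horizontal reflection) If `e` is even, `o` and `õ` are odd, `õ ≥ 3`, and every
edge sum of `M = [[a,b,c],[e,o,õ],[a,b,c]]` is at least `2`, then `nim(TER(M)) = 0`. -/
theorem TER_horizontal_reflection (a b c e o ot : ℕ)
    (he : Even e) (ho : Odd o) (hot : Odd ot) (hot3 : 3 ≤ ot)
    (hr1 : 2 ≤ a + b + c) (hr3 : 2 ≤ a + b + c)
    (hc1 : 2 ≤ a + e + a) (hc3 : 2 ≤ c + ot + c) :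
    nimTERmat ![![a, b, c], ![e, o, ot], ![a, b, c]] = 0 := by
  have he' : e % 2 = 0 := Nat.even_iff.1 he
  have ho' : o % 2 = 1 := Nat.odd_iff.1 ho
  have hot' : ot % 2 = 1 := Nat.odd_iff.1 hot
  have hS : inS (![![a, b, c], ![e, o, ot], ![a, b, c]]) :=
    ⟨a, b, c, e, o, ot, ⟨hr1, hc1, hc3, he', Or.inl ⟨ho', hot', hot3⟩⟩, rfl⟩
  rw [nimTERmat_eq]
  exact main_lemma (mtot (![![a, b, c], ![e, o, ot], ![a, b, c]])) _ le_rfl hS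
end
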